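/- arXiv:2403.02205 — 11 statements merged into one kernel-verified Lean document; each statement's English description precedes it below -/
import Mathlib

section
/- Let A and B be subsets of a finite abelian group G, and suppose A is periodic with subgroup of periods H (i.e. H = {h ∈ G : A + h = A} is nontrivial). Then G = A ⊕ B if and only if G/H = (A/H) ⊕ (B/H) and (B − B) ∩ H = {0}. -/
open Pointwise

/-!
Since `A` is a union of `H`-cosets, whether `x ∈ A` depends only on `x + H`, so any
decomposition `g = a + b` may be shifted to `g = (a + h) + b` inside `A`. Uniqueness of
decompositions in `G` therefore splits into uniqueness modulo `H` and the requirement that no two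
distinct elements of `B` lie in the same `H`-coset.
-/

namespace AddSubgroup

section

variable {G : Type*} [AddGroup G] {S T : Set G}

theorem isComplement_iff_existsUnique_mem :
    IsComplement S T ↔ ∀ g : G, ∃! p : G × G, p.1 ∈ S ∧ p.2 ∈ T ∧ p.1 + p.2 = g := by
  rw [isComplement_iff_existsUnique]
  refine forall_congr' fun g => ⟨?_, ?_⟩
  · rintro ⟨⟨⟨s, hs⟩, ⟨t, ht⟩⟩, rfl, huniq⟩
    refine ⟨(s, t), ⟨hs, ht, rfl⟩, ?_⟩
    rintro ⟨s', t'⟩ ⟨hs', ht', e⟩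
    have := huniq (⟨s', hs'⟩, ⟨t', ht'⟩) e
    simp_all
  · rintro ⟨⟨s, t⟩, ⟨hs, ht, rfl⟩, huniq⟩
    refine ⟨(⟨s, hs⟩, ⟨t, ht⟩), rfl, ?_⟩
    rintro ⟨⟨s', hs'⟩, ⟨t', ht'⟩⟩ e
    have := huniq (s', t') ⟨hs', ht', e⟩
    simp_all

theorem isComplement_iff_forall_exists_add_eq_and_add_injective :
    IsComplement S T ↔ (∀ g : G, ∃ s ∈ S, ∃ t ∈ T, s + t = g) ∧
      ∀ s ∈ S, ∀ t ∈ T, ∀ s' ∈ S, ∀ t' ∈ T, s + t = s' + t' → s = s' ∧ t = t' := by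
  rw [IsComplement, Function.Bijective, and_comm]
  refine and_congr ⟨fun h g => ?_, fun h g => ?_⟩ ⟨fun h s hs t ht s' hs' t' ht' e => ?_, ?_⟩
  · obtain ⟨⟨⟨s, hs⟩, ⟨t, ht⟩⟩, e⟩ := h g
    exact ⟨s, hs, t, ht, e⟩
  · obtain ⟨s, hs, t, ht, e⟩ := h g
    exact ⟨(⟨s, hs⟩, ⟨t, ht⟩), e⟩
  · have := @h (⟨s, hs⟩, ⟨t, ht⟩) (⟨s', hs'⟩, ⟨t', ht'⟩) e
    simp_all
  · rintro h ⟨⟨s, hs⟩, ⟨t, ht⟩⟩ ⟨⟨s', hs'⟩, ⟨t', ht'⟩⟩ e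
    obtain ⟨rfl, rfl⟩ := h s hs t ht s' hs' t' ht' e
    rfl

end

section Quotient

open QuotientAddGroup

variable {G : Type*} [AddCommGroup G] {A B : Set G} {H : AddSubgroup G}

theorem mem_of_mk_eq_mk (hA : ∀ a ∈ A, ∀ h ∈ H, a + h ∈ A) {a x : G} (ha : a ∈ A)
    (e : (x : G ⧸ H) = a) : x ∈ A := by
  simpa using hA a ha (x - a) (eq_iff_sub_mem.mp e)

theorem IsComplement.image_mk (hA : ∀ a ∈ A, ∀ h ∈ H, a + h ∈ A) (hAB : IsComplement A B) :
    IsComplement ((QuotientAddGroup.mk : G → G ⧸ H) '' A)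
      ((QuotientAddGroup.mk : G → G ⧸ H) '' B) := by
  rw [isComplement_iff_forall_exists_add_eq_and_add_injective] at hAB ⊢
  obtain ⟨hcover, hinj⟩ := hAB
  refine ⟨fun q => ?_, ?_⟩
  · obtain ⟨g, rfl⟩ := mk_surjective q
    obtain ⟨a, ha, b, hb, rfl⟩ := hcover g
    exact ⟨a, ⟨a, ha, rfl⟩, b, ⟨b, hb, rfl⟩, rfl⟩
  · rintro _ ⟨a, ha, rfl⟩ _ ⟨b, hb, rfl⟩ _ ⟨a', ha', rfl⟩ _ ⟨b', hb', rfl⟩ e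
    have hA' : a + b - b' ∈ A := mem_of_mk_eq_mk hA ha' (by
      rw [mk_sub, mk_add, e, add_sub_cancel_right])
    obtain ⟨-, rfl⟩ := hinj _ hA' _ hb' _ ha _ hb (sub_add_cancel _ _)
    exact ⟨add_right_cancel e, rfl⟩

theorem IsComplement.sub_inter_eq_zero (hA : ∀ a ∈ A, ∀ h ∈ H, a + h ∈ A)
    (hAB : IsComplement A B) : (B - B) ∩ (H : Set G) = {0} := by
  obtain ⟨a, ha⟩ := hAB.nonempty_left
  obtain ⟨b, hb⟩ := hAB.nonempty_right
  refine Set.eq_singleton_iff_unique_mem.mpr ⟨⟨⟨b, hb, b, hb, sub_self b⟩, H.zero_mem⟩, ?_⟩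
  rintro x ⟨hx, hxH⟩
  obtain ⟨b₁, hb₁, b₂, hb₂, rfl⟩ := Set.mem_sub.mp hx
  obtain ⟨-, rfl⟩ := (isComplement_iff_forall_exists_add_eq_and_add_injective.mp hAB).2
    _ (hA a ha _ hxH) _ hb₂ _ ha _ hb₁ (by abel)
  exact sub_self b₂

theorem isComplement_of_image_mk (hA : ∀ a ∈ A, ∀ h ∈ H, a + h ∈ A)
    (hAB : IsComplement ((QuotientAddGroup.mk : G → G ⧸ H) '' A)
      ((QuotientAddGroup.mk : G → G ⧸ H) '' B))
    (hB : (B - B) ∩ (H : Set G) ⊆ {0}) : IsComplement A B := by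
  rw [isComplement_iff_forall_exists_add_eq_and_add_injective] at hAB ⊢
  obtain ⟨hcover, hinj⟩ := hAB
  refine ⟨fun g => ?_, fun a ha b hb a' ha' b' hb' e => ?_⟩
  · obtain ⟨_, ⟨a, ha, rfl⟩, _, ⟨b, hb, rfl⟩, e⟩ := hcover g
    refine ⟨g - b, mem_of_mk_eq_mk hA ha ?_, b, hb, sub_add_cancel g b⟩
    rw [mk_sub, ← e, add_sub_cancel_right]
  · have hmk : (b : G ⧸ H) = b' :=
      (hinj _ ⟨a, ha, rfl⟩ _ ⟨b, hb, rfl⟩ _ ⟨a', ha', rfl⟩ _ ⟨b', hb', rfl⟩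
        (by rw [← mk_add, e, mk_add])).2
    have hbb' : b - b' = 0 := hB ⟨⟨b, hb, b', hb', rfl⟩, eq_iff_sub_mem.mp hmk⟩
    obtain rfl := sub_eq_zero.mp hbb'
    exact ⟨add_right_cancel e, rfl⟩

theorem isComplement_iff_image_mk (hA : ∀ a ∈ A, ∀ h ∈ H, a + h ∈ A) :
    IsComplement A B ↔
      IsComplement ((QuotientAddGroup.mk : G → G ⧸ H) '' A)
          ((QuotientAddGroup.mk : G → G ⧸ H) '' B) ∧
        (B - B) ∩ (H : Set G) = {0} :=
  ⟨fun h => ⟨h.image_mk hA, h.sub_inter_eq_zero hA⟩,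
    fun h => isComplement_of_image_mk hA h.1 h.2.subset⟩

end Quotient

end AddSubgroup

theorem stmt_2_general {G : Type*} [AddCommGroup G]
    (A B : Set G) (H : AddSubgroup G)
    (hH : ∀ h : G, h ∈ H ↔ (fun x => x + h) '' A = A) :
    (∀ g : G, ∃! ab : G × G, ab.1 ∈ A ∧ ab.2 ∈ B ∧ ab.1 + ab.2 = g) ↔
      ((∀ q : G ⧸ H, ∃! ab : (G ⧸ H) × (G ⧸ H),
          ab.1 ∈ ((QuotientAddGroup.mk : G → G ⧸ H) '' A) ∧
          ab.2 ∈ ((QuotientAddGroup.mk : G → G ⧸ H) '' B) ∧ ab.1 + ab.2 = q) ∧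
        (B - B) ∩ (H : Set G) = {0}) := by
  have hA : ∀ a ∈ A, ∀ h ∈ H, a + h ∈ A := fun a ha h hh => (hH h).mp hh ▸ ⟨a, ha, rfl⟩
  simp only [← AddSubgroup.isComplement_iff_existsUnique_mem]
  exact AddSubgroup.isComplement_iff_image_mk hA

theorem stmt_2 {G : Type*} [AddCommGroup G] [Fintype G]
    (A B : Set G) (H : AddSubgroup G)
    (hH : ∀ h : G, h ∈ H ↔ (fun x => x + h) '' A = A)
    (hne : H ≠ ⊥) :
    (∀ g : G, ∃! ab : G × G, ab.1 ∈ A ∧ ab.2 ∈ B ∧ ab.1 + ab.2 = g) ↔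
      ((∀ q : G ⧸ H, ∃! ab : (G ⧸ H) × (G ⧸ H),
          ab.1 ∈ ((QuotientAddGroup.mk : G → G ⧸ H) '' A) ∧
          ab.2 ∈ ((QuotientAddGroup.mk : G → G ⧸ H) '' B) ∧ ab.1 + ab.2 = q) ∧
        (B - B) ∩ (H : Set G) = {0}) :=
  stmt_2_general A B H hH
end

section
/- Let H be a subgroup of ℤ_n and let A, B be nonempty subsets of ℤ_n such that the projection of A to ℤ_n/H is injective (|A/H| = |A|). If ℤ_n/H = (A/H) ⊕ (B/H), then ℤ_n = A ⊕ (B + H). -/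
open Pointwise

theorem stmt_3 {n : ℕ} (H : AddSubgroup (ZMod n)) (A B : Set (ZMod n))
    (hA : A.Nonempty) (hB : B.Nonempty)
    (hinj : Set.InjOn (QuotientAddGroup.mk : ZMod n → ZMod n ⧸ H) A)
    (h : ∀ q : ZMod n ⧸ H, ∃! ab : (ZMod n ⧸ H) × (ZMod n ⧸ H),
        ab.1 ∈ ((QuotientAddGroup.mk : ZMod n → ZMod n ⧸ H) '' A) ∧
        ab.2 ∈ ((QuotientAddGroup.mk : ZMod n → ZMod n ⧸ H) '' B) ∧ ab.1 + ab.2 = q) :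
    ∀ g : ZMod n, ∃! ab : ZMod n × ZMod n,
      ab.1 ∈ A ∧ ab.2 ∈ (B + (H : Set (ZMod n))) ∧ ab.1 + ab.2 = g := by
  intro g
  obtain ⟨⟨qa, qb⟩, ⟨⟨a, ha, hqa⟩, ⟨b, hb, hqb⟩, hsum⟩, huniq⟩ :=
    h ((QuotientAddGroup.mk : ZMod n → ZMod n ⧸ H) g)
  dsimp only at hqa hqb hsum
  -- g - a - b ∈ H
  have hmem : g - a - b ∈ H := by
    rw [← QuotientAddGroup.eq_zero_iff]
    have hg : ((g : ZMod n) : ZMod n ⧸ H) = qa + qb := hsum.symm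
    rw [← hqa, ← hqb] at hg
    simp only [QuotientAddGroup.mk_sub, hg]
    abel
  refine ⟨(a, g - a), ⟨ha, ⟨b, hb, g - a - b, hmem, by ring⟩, by ring⟩, ?_⟩
  rintro ⟨a', c'⟩ ⟨ha', ⟨b', hb', h', hh', hc'⟩, hsum'⟩
  dsimp only at ha' hc' hsum' ⊢
  -- mk c' = mk b'
  have hc'q : (QuotientAddGroup.mk : ZMod n → ZMod n ⧸ H) c'
      = (QuotientAddGroup.mk : ZMod n → ZMod n ⧸ H) b' := by
    rw [← hc']
    exact QuotientAddGroup.mk_add_of_mem b' (SetLike.mem_coe.mp hh')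
  have hkey : ((a' : ZMod n ⧸ H), (c' : ZMod n ⧸ H)) = (qa, qb) := by
    apply huniq
    refine ⟨⟨a', ha', rfl⟩, ⟨b', hb', hc'q.symm⟩, ?_⟩
    simp only [← QuotientAddGroup.mk_add, hsum']
  have h1 : (QuotientAddGroup.mk : ZMod n → ZMod n ⧸ H) a' = qa := congrArg Prod.fst hkey
  have haa : a' = a := hinj ha' ha (h1.trans hqa.symm)
  have : c' = g - a := by rw [← hsum', haa]; abel
  simp [haa, this]
end

section
/- If a finite abelian group G admits factorizations G = H ⊕ K = A ⊕ B, where H, K are subgroups of G with coprime orders and A, B are subsets with |A| = |H| and |B| = |K|, then G = H ⊕ B and G = A ⊕ K. -/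
/-!
Multiplier lemma: if `G = A ⊕ B` and `r` is coprime to `|A|`, then `(a, b) ↦ r • a + b` is still a
bijection `A × B → G`. It suffices to take `r = p` prime; in `𝔽_p[G]` write `a, b, u` for the sums
of the elements of `A`, `B`, `G`. Then `a * b = u`, `a * u = |A| • u`, and by Frobenius `a ^ p` is
the sum over `p • A`, so `(∑ p • A) * b = a ^ (p - 1) * u = |A| ^ (p - 1) • u = u`: every element
of `G` is some `p • a + b`, and counting gives bijectivity.

Now take `r = |K|`. Since `|K|` kills `K`, `|K| • A ⊆ H`, so `H + B = G`, and
`|H| |B| = |A| |B| = |G|`.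
-/

open Pointwise
open AddMonoidAlgebra Function

section GroupAlgebra

variable {R : Type*} [Semiring R]

theorem single_one_mul_sum_univ {G : Type*} [AddGroup G] [Fintype G] (x : G) :
    single x (1 : R) * ∑ g : G, single g 1 = ∑ g : G, single g 1 := by
  simp only [Finset.mul_sum, single_mul_single, one_mul]
  exact Fintype.sum_equiv (Equiv.addLeft x) _ _ fun _ => rfl

theorem sum_single_mul_sum_univ {G α : Type*} [AddGroup G] [Fintype G] [Fintype α] (φ : α → G) :
    (∑ i, single (φ i) (1 : R)) * ∑ g : G, single g 1 =
      (Fintype.card α : R) • ∑ g : G, single g 1 := by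
  simp only [Finset.sum_mul, single_one_mul_sum_univ, Finset.sum_const, Finset.card_univ,
    Nat.cast_smul_eq_nsmul]

theorem sum_single_mul_sum_single {G α β : Type*} [Add G] [Fintype α] [Fintype β]
    (φ : α → G) (ψ : β → G) :
    (∑ i, single (φ i) (1 : R)) * ∑ j, single (ψ j) 1 = ∑ x : α × β, single (φ x.1 + ψ x.2) 1 := by
  simp only [Finset.sum_mul_sum, single_mul_single, one_mul]
  exact (Fintype.sum_prod_type' fun i j => single (φ i + ψ j) (1 : R)).symm

theorem sum_single_eq_sum_univ_of_bijective {G α : Type*} [Fintype G] [Fintype α] {f : α → G}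
    (hf : Bijective f) : ∑ x, single (f x) (1 : R) = ∑ g : G, single g 1 :=
  Fintype.sum_bijective f hf _ _ fun _ => rfl

theorem surjective_of_sum_single_eq_sum_univ [Nontrivial R] {G α : Type*} [Fintype G] [Fintype α]
    {f : α → G} (hf : ∑ x, single (f x) (1 : R) = ∑ g : G, single g 1) : Surjective f := by
  classical
  intro g
  by_contra! hg
  have := congrArg (fun y : AddMonoidAlgebra R G => y.coeff g) hf
  simp [Finsupp.single_apply, hg] at this

end GroupAlgebra

section Multiplier

variable {G ι κ : Type*} [AddCommGroup G] [Finite G] [Finite ι] [Finite κ]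

theorem bijective_prime_nsmul_add_of_not_dvd {p : ℕ} (hp : p.Prime) (hpι : ¬p ∣ Nat.card ι)
    {φ : ι → G} {ψ : κ → G} (h : Bijective fun x : ι × κ => φ x.1 + ψ x.2) :
    Bijective fun x : ι × κ => p • φ x.1 + ψ x.2 := by
  have := Fact.mk hp
  have := Fintype.ofFinite G
  have := Fintype.ofFinite ι
  have := Fintype.ofFinite κ
  have : CharP (AddMonoidAlgebra (ZMod p) G) p := charP_of_injective_algebraMap' (ZMod p) p
  set a : AddMonoidAlgebra (ZMod p) G := ∑ i, single (φ i) 1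
  set b : AddMonoidAlgebra (ZMod p) G := ∑ j, single (ψ j) 1
  set u : AddMonoidAlgebra (ZMod p) G := ∑ g : G, single g 1
  have hab : a * b = u :=
    (sum_single_mul_sum_single φ ψ).trans (sum_single_eq_sum_univ_of_bijective h)
  have hfermat : (Fintype.card ι : ZMod p) ^ (p - 1) = 1 := by
    refine ZMod.pow_card_sub_one_eq_one ?_
    rwa [Ne, ZMod.natCast_eq_zero_iff, ← Nat.card_eq_fintype_card]
  have hfrob : a ^ p = ∑ i, single (p • φ i) 1 := by
    simp only [a, sum_pow_char, single_pow, one_pow]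
  have hau : ∀ n : ℕ, a ^ n * u = (Fintype.card ι : ZMod p) ^ n • u := by
    intro n
    induction n with
    | zero => simp
    | succ n ih =>
      rw [pow_succ', mul_assoc, ih, mul_smul_comm, sum_single_mul_sum_univ, smul_smul, ← pow_succ]
  have hkey : ∑ x : ι × κ, single (p • φ x.1 + ψ x.2) (1 : ZMod p) = u :=
    calc _ = a ^ p * b := by rw [hfrob, sum_single_mul_sum_single]
      _ = a ^ (p - 1) * (a * b) := by rw [← mul_assoc, ← pow_succ, Nat.sub_add_cancel hp.one_le]
      _ = u := by rw [hab, hau, hfermat, one_smul]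
  refine (surjective_of_sum_single_eq_sum_univ hkey).bijective_of_nat_card_le ?_
  exact (Nat.card_eq_of_bijective _ h).le

theorem bijective_nsmul_add_of_coprime {r : ℕ} (hr : r.Coprime (Nat.card ι))
    {φ : ι → G} {ψ : κ → G} (h : Bijective fun x : ι × κ => φ x.1 + ψ x.2) :
    Bijective fun x : ι × κ => r • φ x.1 + ψ x.2 := by
  induction r using Nat.recOnMul generalizing φ with
  | zero =>
    obtain ⟨_, ⟨i₀⟩⟩ := Nat.card_eq_one_iff_unique.mp ((Nat.coprime_zero_left _).mp hr)
    convert (Equiv.addLeft (-φ i₀)).bijective.comp h using 2 with x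
    simp [Subsingleton.elim x.1 i₀]
  | one => simpa only [one_smul] using h
  | prime p hp =>
    exact bijective_prime_nsmul_add_of_not_dvd hp ((Nat.Prime.coprime_iff_not_dvd hp).mp hr) h
  | mul m n ihm ihn =>
    obtain ⟨hm, hn⟩ := Nat.coprime_mul_iff_left.mp hr
    simpa only [mul_nsmul] using ihn hn (φ := fun i => m • φ i) (ihm hm h)

end Multiplier

namespace AddSubgroup

theorem isComplement_iff_forall_existsUnique_mem {G : Type*} [AddGroup G] {S T : Set G} :
    IsComplement S T ↔ ∀ g : G, ∃! st : G × G, st.1 ∈ S ∧ st.2 ∈ T ∧ st.1 + st.2 = g := by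
  refine isComplement_iff_existsUnique.trans (forall_congr' fun g => ?_)
  constructor
  · rintro ⟨⟨⟨s, hs⟩, ⟨t, ht⟩⟩, rfl, huniq⟩
    refine ⟨(s, t), ⟨hs, ht, rfl⟩, ?_⟩
    rintro ⟨s', t'⟩ ⟨hs', ht', hst'⟩
    simpa using huniq (⟨s', hs'⟩, ⟨t', ht'⟩) hst'
  · rintro ⟨⟨s, t⟩, ⟨hs, ht, rfl⟩, huniq⟩
    refine ⟨(⟨s, hs⟩, ⟨t, ht⟩), rfl, ?_⟩
    rintro ⟨⟨s', hs'⟩, ⟨t', ht'⟩⟩ hst'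
    simpa using huniq (s', t') ⟨hs', ht', hst'⟩

theorem IsComplement.symm {G : Type*} [AddCommGroup G] {S T : Set G} (h : IsComplement S T) :
    IsComplement T S := by
  unfold IsComplement at *
  convert h.comp (Equiv.prodComm T S).bijective using 1
  funext x
  exact add_comm _ _

theorem IsComplement'.card_nsmul_mem_left {G : Type*} [AddCommGroup G] {H K : AddSubgroup G}
    [Finite K] (h : IsComplement' H K) (g : G) : Nat.card K • g ∈ H := by
  obtain ⟨⟨⟨x, hx⟩, ⟨y, hy⟩⟩, rfl⟩ := h.2 g
  have hy0 : Nat.card K • y = 0 := congrArg Subtype.val (card_nsmul_eq_zero' (x := (⟨y, hy⟩ : K)))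
  simpa only [nsmul_add, hy0, add_zero] using nsmul_mem hx _

theorem IsComplement'.isComplement_of_card_eq {G : Type*} [AddCommGroup G] [Finite G]
    {H K : AddSubgroup G} {A B : Set G} (hHK : IsComplement' H K) (hAB : IsComplement A B)
    (hcop : (Nat.card H).Coprime (Nat.card K)) (hA : Nat.card A = Nat.card H) :
    IsComplement H B := by
  have hbij := bijective_nsmul_add_of_coprime (φ := ((↑) : A → G)) (ψ := ((↑) : B → G))
    (r := Nat.card K) (hA ▸ hcop.symm) hAB
  refine Surjective.bijective_of_nat_card_le (fun g => ?_) ?_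
  · obtain ⟨⟨a, b⟩, rfl⟩ := hbij.2 g
    exact ⟨(⟨_, hHK.card_nsmul_mem_left a⟩, b), rfl⟩
  · rw [Nat.card_prod, SetLike.coe_sort_coe, ← hA, hAB.card_mul_card]

end AddSubgroup

open AddSubgroup in
theorem stmt_4 {G : Type*} [AddCommGroup G] [Fintype G]
    (H K : AddSubgroup G) (A B : Set G)
    (hcop : Nat.Coprime (Nat.card H) (Nat.card K))
    (hAcard : A.ncard = Nat.card H) (hBcard : B.ncard = Nat.card K)
    (hHK : ∀ g : G, ∃! hk : G × G, hk.1 ∈ H ∧ hk.2 ∈ K ∧ hk.1 + hk.2 = g)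
    (hAB : ∀ g : G, ∃! ab : G × G, ab.1 ∈ A ∧ ab.2 ∈ B ∧ ab.1 + ab.2 = g) :
    (∀ g : G, ∃! hb : G × G, hb.1 ∈ H ∧ hb.2 ∈ B ∧ hb.1 + hb.2 = g) ∧
      (∀ g : G, ∃! ak : G × G, ak.1 ∈ A ∧ ak.2 ∈ K ∧ ak.1 + ak.2 = g) := by
  have hHK' : IsComplement' H K := isComplement_iff_forall_existsUnique_mem.mpr hHK
  have hAB' : IsComplement A B := isComplement_iff_forall_existsUnique_mem.mpr hAB
  have hA : Nat.card A = Nat.card H := by rw [Nat.card_coe_set_eq, hAcard]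
  have hB : Nat.card B = Nat.card K := by rw [Nat.card_coe_set_eq, hBcard]
  exact ⟨isComplement_iff_forall_existsUnique_mem.mp (hHK'.isComplement_of_card_eq hAB' hcop hA),
    isComplement_iff_forall_existsUnique_mem.mp
      (hHK'.symm.isComplement_of_card_eq hAB'.symm hcop.symm hB).symm⟩
end

section
/- Let n ≥ 3 and let S be an inverse-closed subset of ℤ_n \ {0} with S_0 = S ∪ {0} such that |S_0| divides n. Let H be a subgroup of ℤ_n. Then H is a perfect code in Cay(ℤ_n, S) if and only if (S_0 − S_0) ∩ H = {0} and H = ⟨|S_0|⟩, the subgroup of ℤ_n generated by |S_0|. -/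
open Pointwise

/-- `D` is a perfect code in `Cay(ℤ_n, S)` iff every element of `ℤ_n` has a unique
representation `s + d` with `s ∈ S₀ = S ∪ {0}` and `d ∈ D`. -/
def IsCayleyPerfectCode {n : ℕ} (S0 D : Set (ZMod n)) : Prop :=
  ∀ g : ZMod n, ∃! sd : ZMod n × ZMod n, sd.1 ∈ S0 ∧ sd.2 ∈ D ∧ sd.1 + sd.2 = g

theorem stmt_5 (n : ℕ) (hn : 3 ≤ n) (S : Finset (ZMod n))
    (h0 : (0 : ZMod n) ∉ S) (hsym : ∀ s ∈ S, -s ∈ S)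
    (hdvd : (insert (0 : ZMod n) S).card ∣ n)
    (H : AddSubgroup (ZMod n)) :
    IsCayleyPerfectCode (insert (0 : ZMod n) (S : Set (ZMod n))) (H : Set (ZMod n)) ↔
      ((insert (0 : ZMod n) (S : Set (ZMod n)) - insert (0 : ZMod n) (S : Set (ZMod n)))
          ∩ (H : Set (ZMod n)) = {0} ∧
        H = AddSubgroup.zmultiples (((insert (0 : ZMod n) S).card : ZMod n))) := by
  have hn0 : n ≠ 0 := by omega
  haveI : NeZero n := ⟨hn0⟩
  set T : Finset (ZMod n) := insert (0 : ZMod n) S with hT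
  set k : ℕ := T.card with hk
  have hcoe : (insert (0 : ZMod n) (S : Set (ZMod n))) = (T : Set (ZMod n)) := by
    simp [hT]
  have hk0 : 0 < k := Finset.card_pos.mpr ⟨0, Finset.mem_insert_self _ _⟩
  have hnk0 : 0 < n / k := Nat.div_pos (Nat.le_of_dvd (by omega) hdvd) hk0
  have hkmul : k * (n / k) = n := Nat.mul_div_cancel' hdvd
  -- cardinality of the subgroup generated by k
  have hcardZ : Nat.card (AddSubgroup.zmultiples ((k : ZMod n))) = n / k := by
    rw [Nat.card_zmultiples, ZMod.addOrderOf_coe k hn0, Nat.gcd_eq_right hdvd]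
  -- the intersection condition gives injectivity of (s, h) ↦ s + h
  have hinj : (((T : Set (ZMod n)) - (T : Set (ZMod n))) ∩ (H : Set (ZMod n)) = {0}) →
      ∀ s h s' h', s ∈ T → h ∈ H → s' ∈ T → h' ∈ H → s + h = s' + h' → s = s' ∧ h = h' := by
    intro hint s h s' h' hs hh hs' hh' heq
    have hmem : s - s' ∈ ((T : Set (ZMod n)) - (T : Set (ZMod n))) ∩ (H : Set (ZMod n)) := by
      constructor
      · exact Set.sub_mem_sub hs hs'
      · have : s - s' = h' - h := by linear_combination heq
        rw [this]
        exact sub_mem hh' hh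
    rw [hint, Set.mem_singleton_iff, sub_eq_zero] at hmem
    refine ⟨hmem, ?_⟩
    have := heq
    rw [hmem] at this
    exact add_left_cancel this
  rw [hcoe]
  constructor
  · intro hpc
    -- intersection is {0}
    have hint : ((T : Set (ZMod n)) - (T : Set (ZMod n))) ∩ (H : Set (ZMod n)) = {0} := by
      apply Set.eq_singleton_iff_unique_mem.mpr
      constructor
      · have h0T : (0 : ZMod n) ∈ (T : Set (ZMod n)) := by
          exact_mod_cast Finset.mem_insert_self 0 S
        exact ⟨by simpa using Set.sub_mem_sub h0T h0T, H.zero_mem⟩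
      · rintro x ⟨hx1, hx2⟩
        obtain ⟨s, hs, s', hs', hss'⟩ := Set.mem_sub.mp hx1
        obtain ⟨p, hp, hup⟩ := hpc s
        have h1 : ((s, 0) : ZMod n × ZMod n) = p :=
          hup (s, 0) ⟨by exact_mod_cast hs, H.zero_mem, add_zero s⟩
        have h2 : ((s', x) : ZMod n × ZMod n) = p :=
          hup (s', x) ⟨by exact_mod_cast hs', hx2, by linear_combination -hss'⟩
        have := h1.trans h2.symm
        exact (Prod.ext_iff.mp this).2.symm
    refine ⟨hint, ?_⟩
    -- the addition map is a bijection, so |H| = n / k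
    have hfin : Finite (H : Set (ZMod n)) := Set.toFinite _
    let f : {x // x ∈ T} × H → ZMod n := fun p => p.1.1 + (p.2 : ZMod n)
    have hfbij : Function.Bijective f := by
      constructor
      · rintro ⟨⟨s, hs⟩, ⟨h, hh⟩⟩ ⟨⟨s', hs'⟩, ⟨h', hh'⟩⟩ heq
        obtain ⟨e1, e2⟩ := hinj hint s h s' h' hs hh hs' hh' heq
        simp [e1, e2]
      · intro g
        obtain ⟨⟨s, h⟩, ⟨hs, hh, hsum⟩, -⟩ := hpc g
        exact ⟨(⟨s, by exact_mod_cast hs⟩, ⟨h, hh⟩), hsum⟩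
    have hcard : k * Nat.card H = n := by
      have := Nat.card_eq_of_bijective f hfbij
      rwa [Nat.card_prod, Nat.card_eq_fintype_card (α := {x // x ∈ T}),
        Fintype.card_coe, Nat.card_zmod] at this
    have hcardH : Nat.card H = n / k := by
      have h2 : n = Nat.card H * k := by rw [Nat.mul_comm]; exact hcard.symm
      exact (Nat.div_eq_of_eq_mul_left hk0 h2).symm
    -- every element of H is a multiple of k
    have hle : H ≤ AddSubgroup.zmultiples ((k : ZMod n)) := by
      intro h hh
      have ho : addOrderOf h ∣ n / k := by
        rw [← hcardH]
        exact H.addOrderOf_dvd_natCard hh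
      have hz : (n / k) • h = 0 := addOrderOf_dvd_iff_nsmul_eq_zero.mp ho
      -- deduce k ∣ h.val
      have hval : ((h.val : ℕ) : ZMod n) = h := by simp [ZMod.natCast_val, ZMod.cast_id]
      have hz2 : (((n / k) * h.val : ℕ) : ZMod n) = 0 := by
        push_cast
        rw [hval] at *
        rw [← nsmul_eq_mul] at *
        exact_mod_cast hz
      have hdvd2 : n ∣ (n / k) * h.val := (ZMod.natCast_eq_zero_iff _ _).mp hz2
      have hkval : k ∣ h.val := by
        rcases hdvd2 with ⟨c, hc⟩
        refine ⟨c, ?_⟩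
        have h2 : (n / k) * h.val = (n / k) * (k * c) := by
          rw [hc]
          conv_lhs => rw [← hkmul]
          ring
        exact Nat.eq_of_mul_eq_mul_left hnk0 h2
      rcases hkval with ⟨m, hm⟩
      refine AddSubgroup.mem_zmultiples_iff.mpr ⟨(m : ℤ), ?_⟩
      have : ((k * m : ℕ) : ZMod n) = h := by rw [← hm]; exact hval
      rw [← this, zsmul_eq_mul]
      push_cast
      ring
    exact AddSubgroup.eq_of_le_of_card_ge hle (by rw [hcardZ, hcardH])
  · rintro ⟨hint, hHeq⟩
    have hcardH : Nat.card H = n / k := by rw [hHeq, hcardZ]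
    let f : {x // x ∈ T} × H → ZMod n := fun p => p.1.1 + (p.2 : ZMod n)
    have hcards : Nat.card ({x // x ∈ T} × H) = Nat.card (ZMod n) := by
      rw [Nat.card_prod, Nat.card_eq_fintype_card (α := {x // x ∈ T}),
        Fintype.card_coe, Nat.card_zmod, hcardH, hkmul]
    have hfinj : Function.Injective f := by
      rintro ⟨⟨s, hs⟩, ⟨h, hh⟩⟩ ⟨⟨s', hs'⟩, ⟨h', hh'⟩⟩ heq
      obtain ⟨e1, e2⟩ := hinj hint s h s' h' hs hh hs' hh' heq
      simp [e1, e2]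
    have hfbij : Function.Bijective f :=
      (Nat.bijective_iff_injective_and_card f).mpr ⟨hfinj, hcards⟩
    intro g
    obtain ⟨⟨⟨s, hs⟩, ⟨h, hh⟩⟩, hsum⟩ := hfbij.2 g
    refine ⟨(s, h), ⟨by exact_mod_cast hs, hh, hsum⟩, ?_⟩
    rintro ⟨s', h'⟩ ⟨hs', hh', hsum'⟩
    obtain ⟨e1, e2⟩ := hinj hint s' h' s h (by exact_mod_cast hs') hh' hs hh
      (by rw [hsum']; exact hsum.symm)
    simp [e1, e2]
end

section
/- Let n ≥ 3 and let Cay(ℤ_n, S) be a connected non-complete circulant graph of degree p − 1, where p is a prime. Then Cay(ℤ_n, S) admits a perfect code if and only if p divides n and (S_0 − S_0) ∩ ⟨p⟩ = {0}, where ⟨p⟩ is the subgroup of ℤ_n generated by p. -/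
open Pointwise

/-!
If `S₀ ⊕ D = ℤ_n`, then `|D| = n / p` and, writing `T(z) = ∑_{t ∈ T} z ^ t`, the product
`S₀(z) D(z)` vanishes at every nontrivial `n`-th root of unity `z`. With `p ^ a ∥ n`, the code `D`
cannot vanish at every nontrivial `p ^ a`-th root of unity (that would force `p ^ a ∣ |D|`), so
`S₀(z) = 0` for some `z` of order `p ^ (k + 1)`. Then `∑_{s ∈ S₀} X ^ (s mod p ^ (k + 1))` has
nonnegative coefficients summing to `p`, a nonzero constant term, and is divisible by
`Φ_{p^(k+1)} = ∑_{j < p} X ^ (j p ^ k)`; hence it equals `Φ_{p^(k+1)}`. For `k ≥ 1` this puts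
`S₀` inside `⟨p⟩`, contradicting connectivity; for `k = 0` it says that `S₀` is a transversal of
`⟨p⟩`, which is the stated condition. Conversely, such a transversal tiles `ℤ_n` with `D = ⟨p⟩`.
-/

open Polynomial
open scoped Finset

theorem AddMonoidHom.sub_inter_ker_eq_zero_iff_injOn {G H : Type*} [AddGroup G] [AddGroup H]
    (f : G →+ H) {A : Set G} (hA : A.Nonempty) :
    (A - A) ∩ f.ker = {0} ↔ Set.InjOn f A := by
  constructor
  · intro h a ha b hb hab
    have : a - b ∈ (A - A) ∩ f.ker :=
      ⟨Set.sub_mem_sub ha hb, by rw [SetLike.mem_coe, f.mem_ker, map_sub, hab, sub_self]⟩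
    rw [h] at this
    exact sub_eq_zero.1 this
  · intro h
    ext x
    simp only [Set.mem_inter_iff, Set.mem_sub, SetLike.mem_coe, f.mem_ker, Set.mem_singleton_iff]
    constructor
    · rintro ⟨⟨a, ha, b, hb, rfl⟩, hx⟩
      rw [map_sub, sub_eq_zero] at hx
      rw [h ha hb hx, sub_self]
    · rintro rfl
      obtain ⟨a, ha⟩ := hA
      exact ⟨⟨a, ha, a, ha, sub_self a⟩, map_zero f⟩

theorem isCayleyPerfectCode_ker_of_bijOn {n : ℕ} {H : Type*} [AddGroup H] (f : ZMod n →+ H)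
    {A : Set (ZMod n)} (hA : Set.BijOn f A Set.univ) : IsCayleyPerfectCode A f.ker := by
  intro g
  obtain ⟨a, ha, hag⟩ := hA.surjOn (Set.mem_univ (f g))
  refine ⟨(a, g - a),
    ⟨ha, by rw [SetLike.mem_coe, f.mem_ker, map_sub, hag, sub_self], add_sub_cancel a g⟩, ?_⟩
  rintro ⟨b, d⟩ ⟨hb, hd, rfl⟩
  have hba : b = a := hA.injOn hb ha (by rw [hag, map_add, (f.mem_ker).1 hd, add_zero])
  subst hba
  simp

namespace ZMod

variable {n p : ℕ} [NeZero n]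

theorem castHom_eq_castHom_iff (h : p ∣ n) (x y : ZMod n) :
    castHom h (ZMod p) x = castHom h (ZMod p) y ↔ x.val % p = y.val % p := by
  simp only [castHom_apply, cast_eq_val, natCast_eq_natCast_iff']

theorem castHom_eq_zero_iff (h : p ∣ n) (x : ZMod n) :
    castHom h (ZMod p) x = 0 ↔ p ∣ x.val := by
  simp only [castHom_apply, cast_eq_val, natCast_eq_zero_iff]

theorem ker_castHom (h : p ∣ n) :
    (castHom h (ZMod p)).toAddMonoidHom.ker = AddSubgroup.zmultiples (p : ZMod n) := by
  ext x
  rw [AddMonoidHom.mem_ker, AddSubgroup.mem_zmultiples_iff]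
  constructor
  · intro hx
    obtain ⟨t, ht⟩ := (castHom_eq_zero_iff h x).1 hx
    exact ⟨t, by rw [← natCast_zmod_val x, ht, Nat.cast_mul, natCast_zsmul, nsmul_eq_mul, mul_comm]⟩
  · rintro ⟨t, rfl⟩
    rw [RingHom.toAddMonoidHom_eq_coe, AddMonoidHom.coe_coe, map_zsmul, map_natCast, natCast_self,
      smul_zero]

end ZMod

namespace IsCayleyPerfectCode

variable {n : ℕ}

theorem bijOn_add {A D : Set (ZMod n)} (h : IsCayleyPerfectCode A D) :
    Set.BijOn (fun x : ZMod n × ZMod n => x.1 + x.2) (A ×ˢ D) Set.univ := by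
  refine ⟨fun _ _ => Set.mem_univ _, ?_, fun g _ => ?_⟩
  · rintro x ⟨hx₁, hx₂⟩ y ⟨hy₁, hy₂⟩ hxy
    exact (h _).unique ⟨hx₁, hx₂, rfl⟩ ⟨hy₁, hy₂, hxy.symm⟩
  · obtain ⟨x, ⟨hx₁, hx₂, hx⟩, -⟩ := h g
    exact ⟨x, ⟨hx₁, hx₂⟩, hx⟩

variable [NeZero n] {A D : Finset (ZMod n)}

theorem card_mul_card (h : IsCayleyPerfectCode (A : Set (ZMod n)) D) : #A * #D = n := by
  have hbij := h.bijOn_add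
  rw [← Finset.coe_product] at hbij
  calc #A * #D = #(Finset.univ : Finset (ZMod n)) :=
        Finset.card_product A D ▸ Finset.card_nbij _ (fun _ _ => Finset.mem_univ _) hbij.injOn
          (by simpa using hbij.surjOn)
    _ = n := by rw [Finset.card_univ, ZMod.card]

theorem sum_mul_sum_eq_zero {R : Type*} [CommRing R] [IsDomain R]
    (h : IsCayleyPerfectCode (A : Set (ZMod n)) D) {ψ : AddChar (ZMod n) R} (hψ : ψ ≠ 1) :
    (∑ a ∈ A, ψ a) * (∑ d ∈ D, ψ d) = 0 := by
  have hbij := h.bijOn_add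
  rw [← Finset.coe_product] at hbij
  rw [Finset.sum_mul_sum, ← Finset.sum_product', ← AddChar.sum_eq_zero_of_ne_one hψ]
  exact Finset.sum_nbij _ (fun _ _ => Finset.mem_univ _) hbij.injOn (by simpa using hbij.surjOn)
    fun x _ => (AddChar.map_add_eq_mul ψ x.1 x.2).symm

end IsCayleyPerfectCode

theorem dvd_card_of_sum_pow_eq_zero {ι : Type*} (T : Finset ι) (e : ι → ℕ) {m : ℕ} (hm : m ≠ 0)
    (h : ∀ z : ℂ, z ^ m = 1 → z ≠ 1 → ∑ i ∈ T, z ^ e i = 0) : m ∣ #T := by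
  -- Summing over the powers of a primitive `m`-th root `ζ` counts each `i` with `m ∣ e i`, m times.
  obtain ⟨ζ, hζ⟩ : ∃ ζ : ℂ, IsPrimitiveRoot ζ m := ⟨_, Complex.isPrimitiveRoot_exp m hm⟩
  have geom : ∀ w : ℂ, w ^ m = 1 → ∑ j ∈ Finset.range m, w ^ j = if w = 1 then (m : ℂ) else 0 := by
    intro w hw
    split_ifs with hw1
    · simp [hw1]
    · rw [geom_sum_eq hw1, hw, sub_self, zero_div]
  obtain ⟨m, rfl⟩ := Nat.exists_eq_succ_of_ne_zero hm
  have hcount : (#T : ℂ) = (m + 1 : ℕ) * #{i ∈ T | ζ ^ e i = 1} := by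
    calc (#T : ℂ) = ∑ j ∈ Finset.range (m + 1), ∑ i ∈ T, (ζ ^ j) ^ e i := by
          rw [Finset.sum_range_succ', Finset.sum_eq_zero fun j hj =>
            h _ (by rw [← pow_mul, mul_comm, pow_mul, hζ.pow_eq_one, one_pow])
              (hζ.pow_ne_one_of_pos_of_lt j.succ_ne_zero (by simpa using hj))]
          simp
      _ = ∑ i ∈ T, ∑ j ∈ Finset.range (m + 1), (ζ ^ e i) ^ j := by
          rw [Finset.sum_comm]
          simp only [← pow_mul, mul_comm]
      _ = _ := by
          rw [Finset.sum_congr rfl fun i _ => geom _ (by rw [← pow_mul, mul_comm, pow_mul,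
            hζ.pow_eq_one, one_pow]), Finset.sum_ite, Finset.sum_const_zero, add_zero,
            Finset.sum_const, nsmul_eq_mul, mul_comm]
  exact ⟨_, by exact_mod_cast hcount⟩

namespace Polynomial

theorem coeff_cyclotomic_prime_pow {p : ℕ} (hp : p.Prime) (k t : ℕ) :
    (cyclotomic (p ^ (k + 1)) ℤ).coeff t = if p ^ k ∣ t ∧ t / p ^ k < p then 1 else 0 := by
  have hexpand : cyclotomic (p ^ (k + 1)) ℤ = expand ℤ (p ^ k) (∑ i ∈ Finset.range p, X ^ i) := by
    simp [cyclotomic_prime_pow_eq_geom_sum hp]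
  rw [hexpand, coeff_expand (pow_pos hp.pos k)]
  simp only [finsetSum_coeff, coeff_X_pow, Finset.sum_ite_eq, Finset.mem_range]
  split_ifs <;> simp_all

theorem eq_zero_of_coeff_nonneg_of_eval_one_eq_zero {R : Type*} [Semiring R] [PartialOrder R]
    [IsOrderedAddMonoid R] {P : R[X]} (hP : ∀ i, 0 ≤ P.coeff i) (h : P.eval 1 = 0) : P = 0 := by
  rw [eval_eq_sum_range] at h
  simp only [one_pow, mul_one] at h
  ext i
  rw [coeff_zero]
  by_cases hi : i ≤ P.natDegree
  · exact (Finset.sum_eq_zero_iff_of_nonneg fun j _ => hP j).1 h i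
      (Finset.mem_range.2 (Nat.lt_succ_of_le hi))
  · exact coeff_eq_zero_of_natDegree_lt (not_le.1 hi)

theorem coeff_cyclotomic_prime_pow_mul_of_lt {p k : ℕ} (hp : p.Prime) (Q : ℤ[X]) {i : ℕ}
    (hi : i < p ^ k) : (cyclotomic (p ^ (k + 1)) ℤ * Q).coeff i = Q.coeff i := by
  have hdvd : X ^ p ^ k ∣ cyclotomic (p ^ (k + 1)) ℤ - 1 := by
    refine X_pow_dvd_iff.2 fun d hd => ?_
    rw [coeff_sub, coeff_cyclotomic_prime_pow hp, coeff_one]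
    rcases Nat.eq_zero_or_pos d with rfl | hd0
    · simp [hp.pos]
    · have : ¬ p ^ k ∣ d := fun h => (Nat.le_of_dvd hd0 h).not_gt hd
      simp [this, hd0.ne']
  have := X_pow_dvd_iff.1 (dvd_mul_of_dvd_left hdvd Q) i hi
  rwa [sub_mul, one_mul, coeff_sub, sub_eq_zero] at this

theorem eq_cyclotomic_prime_pow_of_dvd {p k : ℕ} (hp : p.Prime) {C : ℤ[X]}
    (hdvd : cyclotomic (p ^ (k + 1)) ℤ ∣ C) (hdeg : C.natDegree < p ^ (k + 1))
    (hnonneg : ∀ i, 0 ≤ C.coeff i) (hcoeff : 0 < C.coeff 0) (heval : C.eval 1 = p) :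
    C = cyclotomic (p ^ (k + 1)) ℤ := by
  have := Fact.mk hp
  -- `Φ ≡ 1 mod X ^ p ^ k` and `deg Q < p ^ k`, so the coefficients of `Q` are those of `C` below
  -- `p ^ k`: they are nonnegative, sum to `1`, and the constant one is positive, whence `Q = 1`.
  obtain ⟨Q, rfl⟩ := hdvd
  have hQeval : Q.eval 1 = 1 := by
    rw [eval_mul, eval_one_cyclotomic_prime_pow] at heval
    exact mul_left_cancel₀ (by exact_mod_cast hp.ne_zero) (heval.trans (mul_one _).symm)
  have hQdeg : Q.natDegree < p ^ k := by
    have hQ : Q ≠ 0 := by rintro rfl; simp at hQeval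
    rw [natDegree_mul (cyclotomic_ne_zero _ ℤ) hQ, natDegree_cyclotomic,
      Nat.totient_prime_pow_succ hp, pow_succ, Nat.mul_sub_one] at hdeg
    have : p ^ k ≤ p ^ k * p := Nat.le_mul_of_pos_right _ hp.pos
    omega
  have hQ : ∀ i, 0 ≤ (Q - 1).coeff i := by
    intro i
    rw [coeff_sub, coeff_one]
    split_ifs with hi0
    · subst hi0
      linarith [coeff_cyclotomic_prime_pow_mul_of_lt hp Q (pow_pos hp.pos k)]
    · rw [sub_zero]
      rcases lt_or_ge i (p ^ k) with hi | hi
      · exact coeff_cyclotomic_prime_pow_mul_of_lt hp Q hi ▸ hnonneg i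
      · exact (coeff_eq_zero_of_natDegree_lt (hQdeg.trans_le hi)).ge
  have hQ1 : Q = 1 :=
    sub_eq_zero.1 (eq_zero_of_coeff_nonneg_of_eval_one_eq_zero hQ (by simp [hQeval]))
  rw [hQ1, mul_one]

end Polynomial

section ResiduePoly

variable {n : ℕ}

noncomputable def residuePoly (m : ℕ) (T : Finset (ZMod n)) : ℤ[X] :=
  ∑ s ∈ T, X ^ (s.val % m)

theorem coeff_residuePoly (m : ℕ) (T : Finset (ZMod n)) (t : ℕ) :
    (residuePoly m T).coeff t = #{s ∈ T | s.val % m = t} := by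
  simp [residuePoly, finsetSum_coeff, coeff_X_pow, Finset.sum_boole, eq_comm]

theorem natDegree_residuePoly_lt {m : ℕ} (hm : 0 < m) (T : Finset (ZMod n)) :
    (residuePoly m T).natDegree < m := by
  refine lt_of_le_of_lt (natDegree_sum_le_of_forall_le _ _ (n := m - 1) fun s _ => ?_) (by omega)
  rw [natDegree_X_pow]
  exact Nat.le_sub_one_of_lt (Nat.mod_lt _ hm)

theorem eval_one_residuePoly (m : ℕ) (T : Finset (ZMod n)) : (residuePoly m T).eval 1 = #T := by
  simp [residuePoly, eval_finsetSum]

theorem aeval_residuePoly {m : ℕ} (T : Finset (ZMod n)) {z : ℂ} (hz : z ^ m = 1) :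
    aeval z (residuePoly m T) = ∑ s ∈ T, z ^ s.val := by
  simp [residuePoly, ← pow_eq_pow_mod _ hz]

theorem residuePoly_eq_cyclotomic {p k : ℕ} (hp : p.Prime) {T : Finset (ZMod n)} (hT : #T = p)
    (h0 : 0 ∈ T) {z : ℂ} (hz : IsPrimitiveRoot z (p ^ (k + 1))) (hsum : ∑ s ∈ T, z ^ s.val = 0) :
    residuePoly (p ^ (k + 1)) T = cyclotomic (p ^ (k + 1)) ℤ := by
  have hpos : 0 < p ^ (k + 1) := pow_pos hp.pos _
  refine eq_cyclotomic_prime_pow_of_dvd hp ?_ (natDegree_residuePoly_lt hpos T)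
    (fun i => by simp [coeff_residuePoly]) ?_ (by rw [eval_one_residuePoly, hT])
  · rw [cyclotomic_eq_minpoly hz hpos]
    exact minpoly.isIntegrallyClosed_dvd (hz.isIntegral hpos)
      (by rw [aeval_residuePoly T hz.pow_eq_one, hsum])
  · rw [coeff_residuePoly]
    exact_mod_cast Finset.card_pos.2 ⟨0, Finset.mem_filter.2 ⟨h0, by simp⟩⟩

theorem dvd_val_of_residuePoly_eq_cyclotomic {p k : ℕ} (hp : p.Prime) {T : Finset (ZMod n)}
    (hT : residuePoly (p ^ (k + 1)) T = cyclotomic (p ^ (k + 1)) ℤ) {s : ZMod n} (hs : s ∈ T) :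
    p ^ k ∣ s.val := by
  have hcoeff := coeff_residuePoly (p ^ (k + 1)) T (s.val % p ^ (k + 1))
  rw [hT, coeff_cyclotomic_prime_pow hp] at hcoeff
  have hpos : 0 < #{t ∈ T | t.val % p ^ (k + 1) = s.val % p ^ (k + 1)} :=
    Finset.card_pos.2 ⟨s, Finset.mem_filter.2 ⟨hs, rfl⟩⟩
  split_ifs at hcoeff with h
  · exact (Nat.dvd_mod_iff (pow_dvd_pow p k.le_succ)).1 h.1
  · omega

theorem injOn_of_residuePoly_eq_cyclotomic {p k : ℕ} (hp : p.Prime) {T : Finset (ZMod n)}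
    (hT : residuePoly (p ^ (k + 1)) T = cyclotomic (p ^ (k + 1)) ℤ) :
    Set.InjOn (fun s : ZMod n => s.val % p ^ (k + 1)) T := by
  intro s hs t ht hst
  have hcoeff := coeff_residuePoly (p ^ (k + 1)) T (s.val % p ^ (k + 1))
  rw [hT, coeff_cyclotomic_prime_pow hp] at hcoeff
  have hle : #{u ∈ T | u.val % p ^ (k + 1) = s.val % p ^ (k + 1)} ≤ 1 := by
    split_ifs at hcoeff <;> omega
  exact Finset.card_le_one.1 hle s (Finset.mem_filter.2 ⟨hs, rfl⟩) t
    (Finset.mem_filter.2 ⟨ht, hst.symm⟩)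

end ResiduePoly

theorem IsCayleyPerfectCode.exists_residuePoly_eq_cyclotomic {n p : ℕ} [NeZero n] (hp : p.Prime)
    {A D : Finset (ZMod n)} (hA : #A = p) (h0 : 0 ∈ A)
    (h : IsCayleyPerfectCode (A : Set (ZMod n)) D) :
    ∃ k, p ^ (k + 1) ∣ n ∧ residuePoly (p ^ (k + 1)) A = cyclotomic (p ^ (k + 1)) ℤ := by
  set a := n.factorization p
  have hpa : p ^ a ∣ n := Nat.ordProj_dvd n p
  have hsum : ∀ z : ℂ, z ^ p ^ a = 1 → z ≠ 1 →
      (∑ s ∈ A, z ^ s.val) * (∑ d ∈ D, z ^ d.val) = 0 := by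
    intro z hz hz1
    have hzn : z ^ n = 1 := by obtain ⟨c, hc⟩ := hpa; rw [hc, pow_mul, hz, one_pow]
    have hn1 : n ≠ 1 := by rintro rfl; exact hz1 (by simpa using hzn)
    exact h.sum_mul_sum_eq_zero (ψ := AddChar.zmodChar n hzn)
      ((AddChar.zmod_char_ne_one_iff n _).2
        (by simpa [AddChar.zmodChar_apply, ZMod.val_one'' hn1]))
  -- `D` cannot vanish at every nontrivial `p ^ a`-th root of unity, as `p ^ a ∤ #D = n / p`.
  obtain ⟨z, hz, hz1, hzA⟩ : ∃ z : ℂ, z ^ p ^ a = 1 ∧ z ≠ 1 ∧ ∑ s ∈ A, z ^ s.val = 0 := by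
    by_contra! hA'
    have hD := dvd_card_of_sum_pow_eq_zero D ZMod.val (pow_pos hp.pos _).ne'
      fun z hz hz1 => (mul_eq_zero.1 (hsum z hz hz1)).resolve_left (hA' z hz hz1)
    have hcard : p * #D = n := hA ▸ h.card_mul_card
    refine Nat.pow_succ_factorization_not_dvd (NeZero.ne n) hp ?_
    rw [pow_succ']
    exact (mul_dvd_mul_left p hD).trans (dvd_of_eq hcard)
  obtain ⟨k, -, hk⟩ := (Nat.dvd_prime_pow hp).1 (orderOf_dvd_of_pow_eq_one hz)
  obtain ⟨k, rfl⟩ : ∃ j, k = j + 1 := Nat.exists_eq_succ_of_ne_zero (by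
    rintro rfl
    exact hz1 (orderOf_eq_one_iff.1 (hk.trans (pow_zero p))))
  refine ⟨k, hk ▸ (orderOf_dvd_of_pow_eq_one hz).trans hpa, ?_⟩
  exact residuePoly_eq_cyclotomic hp hA h0 (hk ▸ IsPrimitiveRoot.orderOf z) hzA

theorem stmt_6_general (n p : ℕ) (hn : 3 ≤ n) (hp : p.Prime) (S : Finset (ZMod n))
    (h0 : (0 : ZMod n) ∉ S)
    (hdeg : S.card = p - 1)
    (hconn : AddSubgroup.closure (S : Set (ZMod n)) = ⊤) :
    (∃ D : Set (ZMod n), IsCayleyPerfectCode (insert (0 : ZMod n) (S : Set (ZMod n))) D) ↔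
      (p ∣ n ∧
        (insert (0 : ZMod n) (S : Set (ZMod n)) - insert (0 : ZMod n) (S : Set (ZMod n)))
            ∩ (AddSubgroup.zmultiples ((p : ZMod n)) : Set (ZMod n)) = {0}) := by
  have : NeZero n := ⟨by omega⟩
  have : Fact p.Prime := ⟨hp⟩
  have hA : #(insert 0 S) = p := by
    rw [Finset.card_insert_of_notMem h0, hdeg, Nat.sub_add_cancel hp.one_le]
  have hA0 : (0 : ZMod n) ∈ insert 0 S := Finset.mem_insert_self 0 S
  rw [← Finset.coe_insert]
  constructor
  · rintro ⟨D, hD⟩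
    obtain ⟨D, rfl⟩ := D.toFinite.exists_finset_coe
    have hpn : p ∣ n := ⟨#D, (hA ▸ hD.card_mul_card).symm⟩
    refine ⟨hpn, ?_⟩
    rw [← ZMod.ker_castHom hpn, AddMonoidHom.sub_inter_ker_eq_zero_iff_injOn _ ⟨0, hA0⟩]
    obtain ⟨k, -, hk⟩ := hD.exists_residuePoly_eq_cyclotomic hp hA hA0
    cases k with
    | zero =>
      intro s hs t ht hst
      exact injOn_of_residuePoly_eq_cyclotomic hp hk hs ht
        (by simpa using (ZMod.castHom_eq_castHom_iff hpn s t).1 hst)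
    | succ k =>
      have hS : (S : Set (ZMod n)) ⊆ (ZMod.castHom hpn (ZMod p)).toAddMonoidHom.ker := fun s hs =>
        (ZMod.castHom_eq_zero_iff hpn s).2 ((dvd_pow_self p k.succ_ne_zero).trans
          (dvd_val_of_residuePoly_eq_cyclotomic hp hk (Finset.mem_insert_of_mem hs)))
      have h1 := (AddSubgroup.closure_le _).2 hS (hconn ▸ AddSubgroup.mem_top (1 : ZMod n))
      exact absurd ((map_one (ZMod.castHom hpn (ZMod p))).symm.trans h1) one_ne_zero
  · rintro ⟨hpn, hint⟩
    rw [← ZMod.ker_castHom hpn, AddMonoidHom.sub_inter_ker_eq_zero_iff_injOn _ ⟨0, hA0⟩] at hint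
    refine ⟨_, ZMod.ker_castHom hpn ▸
      isCayleyPerfectCode_ker_of_bijOn _ ⟨Set.mapsTo_univ _ _, hint, ?_⟩⟩
    rw [← Finset.coe_univ]
    exact Finset.surjOn_of_injOn_of_card_le _ (fun _ _ => Finset.mem_univ _) hint (by simp [hA])

theorem stmt_6 (n p : ℕ) (hn : 3 ≤ n) (hp : p.Prime) (S : Finset (ZMod n))
    (h0 : (0 : ZMod n) ∉ S) (hsym : ∀ s ∈ S, -s ∈ S)
    (hdeg : S.card = p - 1)
    (hconn : AddSubgroup.closure (S : Set (ZMod n)) = ⊤)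
    (hnoncomplete : insert (0 : ZMod n) (S : Set (ZMod n)) ≠ Set.univ) :
    (∃ D : Set (ZMod n), IsCayleyPerfectCode (insert (0 : ZMod n) (S : Set (ZMod n))) D) ↔
      (p ∣ n ∧
        (insert (0 : ZMod n) (S : Set (ZMod n)) - insert (0 : ZMod n) (S : Set (ZMod n)))
            ∩ (AddSubgroup.zmultiples ((p : ZMod n)) : Set (ZMod n)) = {0}) :=
  stmt_6_general n p hn hp S h0 hdeg hconn
end

section
/- Let Cay(ℤ_n, S) be a circulant graph such that S_0 = S ∪ {0} is periodic with subgroup of periods H. Then Cay(ℤ_n, S) is isomorphic to the wreath product of Cay(ℤ_n/H, (S_0/H) \ {H}) and the complete graph on H. -/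
open Pointwise

/-- The wreath product `Γ ⊗ Σ`: `(u,v)` adjacent to `(x,y)` iff `u ~ x` in `Γ`,
or `u = x` and `v ~ y` in `Σ`. -/
def wreathProd {α β : Type*} (Γ : SimpleGraph α) (Sg : SimpleGraph β) :
    SimpleGraph (α × β) :=
  SimpleGraph.fromRel (fun a b => Γ.Adj a.1 b.1 ∨ (a.1 = b.1 ∧ Sg.Adj a.2 b.2))

/-- The bijection `ZMod n ≃ (ZMod n ⧸ H) × H` given by a choice of coset
representatives. -/
noncomputable def cosetEquiv (n : ℕ) (H : AddSubgroup (ZMod n)) : ZMod n ≃ (ZMod n ⧸ H) × H where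
  toFun x :=
    ((QuotientAddGroup.mk x : ZMod n ⧸ H),
      ⟨x - Quotient.out (QuotientAddGroup.mk x : ZMod n ⧸ H), by
        apply QuotientAddGroup.eq_iff_sub_mem.mp
        exact (QuotientAddGroup.out_eq' _).symm⟩)
  invFun p := Quotient.out p.1 + (p.2 : ZMod n)
  left_inv x := by simp only []; abel
  right_inv p := by
    obtain ⟨q, h⟩ := p
    have hq : (QuotientAddGroup.mk (Quotient.out q + (h : ZMod n)) : ZMod n ⧸ H) = q := by
      conv_rhs => rw [← QuotientAddGroup.out_eq' q]
      apply QuotientAddGroup.eq_iff_sub_mem.mpr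
      have heq : Quotient.out q + (h : ZMod n) - Quotient.out q = (h : ZMod n) := by abel
      rw [heq]; exact h.2
    refine Prod.ext hq ?_
    apply Subtype.ext
    simp only [hq]
    abel

@[simp] lemma cosetEquiv_fst (n : ℕ) (H : AddSubgroup (ZMod n)) (x : ZMod n) :
    (cosetEquiv n H x).1 = (QuotientAddGroup.mk x : ZMod n ⧸ H) := rfl

@[simp] lemma cosetEquiv_snd (n : ℕ) (H : AddSubgroup (ZMod n)) (x : ZMod n) :
    ((cosetEquiv n H x).2 : ZMod n)
      = x - Quotient.out (QuotientAddGroup.mk x : ZMod n ⧸ H) := rfl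

theorem stmt_8 (n : ℕ) (S : Set (ZMod n)) (h0 : (0 : ZMod n) ∉ S)
    (hsym : ∀ s ∈ S, -s ∈ S) (H : AddSubgroup (ZMod n))
    (hH : ∀ h : ZMod n, h ∈ H ↔
      (fun x => x + h) '' (insert (0 : ZMod n) S) = insert (0 : ZMod n) S)
    (hne : H ≠ ⊥) :
    Nonempty
      ((SimpleGraph.fromRel (fun x y : ZMod n => x - y ∈ S)) ≃g
        wreathProd
          (SimpleGraph.fromRel (fun x y : ZMod n ⧸ H =>
            x - y ∈ ((QuotientAddGroup.mk : ZMod n → ZMod n ⧸ H) ''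
                (insert (0 : ZMod n) S)) \ {0}))
          (⊤ : SimpleGraph H)) := by
  classical
  set S0 : Set (ZMod n) := insert (0 : ZMod n) S with hS0def
  have h0S0 : (0 : ZMod n) ∈ S0 := Set.mem_insert _ _
  -- periods move S0 to itself
  have hadd : ∀ h ∈ H, ∀ x ∈ S0, x + h ∈ S0 := by
    intro h hh x hx
    have h1 := (hH h).1 hh
    rw [← h1]
    exact ⟨x, hx, rfl⟩
  have hHS0 : ∀ h : ZMod n, h ∈ H → h ∈ S0 := by
    intro h hh
    simpa using hadd h hh 0 h0S0
  -- membership in S0 only depends on the coset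
  have hmemq : ∀ x : ZMod n,
      (QuotientAddGroup.mk x : ZMod n ⧸ H) ∈ QuotientAddGroup.mk '' S0 ↔ x ∈ S0 := by
    intro x
    constructor
    · rintro ⟨s, hs, hsx⟩
      have hmem : x - s ∈ H := QuotientAddGroup.eq_iff_sub_mem.mp hsx.symm
      have := hadd _ hmem s hs
      simpa using this
    · intro hx; exact ⟨x, hx, rfl⟩
  have hSS0 : ∀ x : ZMod n, x ∈ S ↔ x ∈ S0 ∧ x ≠ 0 := by
    intro x
    constructor
    · intro hx
      exact ⟨Set.mem_insert_of_mem _ hx, fun h => h0 (h ▸ hx)⟩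
    · rintro ⟨hx, hxne⟩
      rcases hx with h | h
      · exact absurd h hxne
      · exact h
  have hS0sym : ∀ s ∈ S0, -s ∈ S0 := by
    rintro s (h | h)
    · simp [h, h0S0]
    · exact Set.mem_insert_of_mem _ (hsym _ h)
  refine ⟨⟨cosetEquiv n H, ?_⟩⟩
  intro x y
  have hxy : cosetEquiv n H x ≠ cosetEquiv n H y ↔ x ≠ y :=
    (cosetEquiv n H).injective.ne_iff
  have hsub : (QuotientAddGroup.mk x - QuotientAddGroup.mk y : ZMod n ⧸ H)
      = QuotientAddGroup.mk (x - y) := by rw [QuotientAddGroup.mk_sub]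
  have hsub' : (QuotientAddGroup.mk y - QuotientAddGroup.mk x : ZMod n ⧸ H)
      = QuotientAddGroup.mk (y - x) := by rw [QuotientAddGroup.mk_sub]
  have hyx : y - x ∈ S0 ↔ x - y ∈ S0 := by
    constructor
    · intro h; have := hS0sym _ h; rwa [neg_sub] at this
    · intro h; have := hS0sym _ h; rwa [neg_sub] at this
  have hT1 : (QuotientAddGroup.mk x : ZMod n ⧸ H) ≠ QuotientAddGroup.mk y →
      ((QuotientAddGroup.mk x - QuotientAddGroup.mk y : ZMod n ⧸ H)
        ∈ (QuotientAddGroup.mk '' S0) \ {0} ↔ x - y ∈ S0) := by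
    intro hqq
    rw [Set.mem_diff, hsub, hmemq, Set.mem_singleton_iff]
    constructor
    · exact fun h => h.1
    · intro h
      refine ⟨h, ?_⟩
      rw [← hsub]
      exact sub_ne_zero_of_ne hqq
  have hT2 : (QuotientAddGroup.mk x : ZMod n ⧸ H) ≠ QuotientAddGroup.mk y →
      ((QuotientAddGroup.mk y - QuotientAddGroup.mk x : ZMod n ⧸ H)
        ∈ (QuotientAddGroup.mk '' S0) \ {0} ↔ x - y ∈ S0) := by
    intro hqq
    rw [Set.mem_diff, hsub', hmemq, Set.mem_singleton_iff]
    constructor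
    · exact fun h => hyx.mp h.1
    · intro h
      refine ⟨hyx.mpr h, ?_⟩
      rw [← hsub']
      exact sub_ne_zero_of_ne hqq.symm
  have lhs_iff : (x ≠ y ∧ (x - y ∈ S ∨ y - x ∈ S)) ↔ (x ≠ y ∧ x - y ∈ S0) := by
    constructor
    · rintro ⟨hxyne, h | h⟩
      · exact ⟨hxyne, Set.mem_insert_of_mem _ h⟩
      · have := hsym _ h
        rw [neg_sub] at this
        exact ⟨hxyne, Set.mem_insert_of_mem _ this⟩
    · rintro ⟨hxyne, h⟩
      exact ⟨hxyne, Or.inl ((hSS0 _).mpr ⟨h, sub_ne_zero_of_ne hxyne⟩)⟩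
  show (wreathProd _ _).Adj _ _ ↔ (SimpleGraph.fromRel _).Adj x y
  unfold wreathProd
  simp only [SimpleGraph.fromRel_adj, SimpleGraph.top_adj, cosetEquiv_fst]
  rw [lhs_iff]
  by_cases hqq : (QuotientAddGroup.mk x : ZMod n ⧸ H) = QuotientAddGroup.mk y
  · have hxS0 : x ≠ y → x - y ∈ S0 := by
      intro _
      exact hHS0 _ (QuotientAddGroup.eq_iff_sub_mem.mp hqq)
    constructor
    · rintro ⟨hpne, -⟩
      exact ⟨hxy.mp hpne, hxS0 (hxy.mp hpne)⟩
    · rintro ⟨hxyne, -⟩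
      have hpne := hxy.mpr hxyne
      refine ⟨hpne, Or.inl (Or.inr ⟨hqq, ?_⟩)⟩
      intro hc
      exact hpne (Prod.ext hqq hc)
  · constructor
    · rintro ⟨hpne, hor⟩
      refine ⟨hxy.mp hpne, ?_⟩
      rcases hor with (⟨-, hA | hB⟩ | ⟨hc, -⟩) | (⟨-, hA | hB⟩ | ⟨hc, -⟩)
      · exact (hT1 hqq).mp hA
      · exact (hT2 hqq).mp hB
      · exact absurd hc hqq
      · exact (hT2 hqq).mp hA
      · exact (hT1 hqq).mp hB
      · exact absurd hc.symm hqq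
    · rintro ⟨hxyne, hmem⟩
      exact ⟨hxy.mpr hxyne, Or.inl (Or.inl ⟨hqq, Or.inl ((hT1 hqq).mpr hmem)⟩)⟩
end

section
/- Let n = p^ℓ m with p prime, ℓ ≥ 1, m ≥ 2, and let Cay(ℤ_n, S) be a connected non-complete circulant graph of degree p^ℓ − 1 with S_0 pyramidal. If (S_0 − S_0) ∩ ⟨p^ℓ⟩ ≠ {0}, then Cay(ℤ_n, S) admits a perfect code containing 0, but no subgroup of ℤ_n is a perfect code in Cay(ℤ_n, S). -/
open Pointwise

/-- Image of a subset `X ⊆ G` in the quotient `G ⧸ H` (denoted `X/H` in the paper). -/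
def ImageSet {G : Type*} [AddCommGroup G] (H : AddSubgroup G) (X : Set G) :
    Set (G ⧸ H) :=
  (QuotientAddGroup.mk : G → G ⧸ H) '' X

/-- `X` is periodic under every element of `P` (i.e. `X + h = X` for all `h ∈ P`). -/
def PeriodicUnder {A : Type*} [Add A] (X P : Set A) : Prop :=
  ∀ h ∈ P, (fun x => x + h) '' X = X

/-- `X` is aperiodic: its only period is `0`. -/
def APeriodic {A : Type*} [AddGroup A] (X : Set A) : Prop :=
  ∀ g : A, (fun x => x + g) '' X = X → g = 0

/-- The subgroup series `H 0 < H 1 < ⋯ < H (2t-1) ≤ H (2t) = G` is an admissible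
subgroup series associated with `X`, in the sense of Definition 1.1 of the paper:
either `H 0 = ⊥` and `X` is aperiodic, or `H 0 ≠ ⊥` and `X` is `H 0`-periodic, and
conditions (T1), (T2), (T3) hold (stated directly in `G` via the canonical
identifications of iterated quotients). -/
def IsAdmissibleSeries {G : Type*} [AddCommGroup G] (X : Set G) (t : ℕ)
    (H : ℕ → AddSubgroup G) : Prop :=
  1 ≤ t ∧
  (∀ i, i + 1 ≤ 2 * t - 1 → H i < H (i + 1)) ∧
  H (2 * t - 1) ≤ H (2 * t) ∧ H (2 * t) = ⊤ ∧
  ((H 0 = ⊥ ∧ APeriodic X) ∨ (H 0 ≠ ⊥ ∧ PeriodicUnder X ((H 0 : Set G)))) ∧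
  (∀ i < t, (ImageSet (H (2 * i)) X - ImageSet (H (2 * i)) X) ∩
      ImageSet (H (2 * i)) ((H (2 * i + 1) : Set G)) = {0}) ∧
  (∀ i, 1 ≤ i → i ≤ t →
      PeriodicUnder (ImageSet (H (2 * i - 1)) X)
        (ImageSet (H (2 * i - 1)) ((H (2 * i) : Set G)))) ∧
  (ImageSet (H (2 * t - 1)) X).ncard = Nat.card (G ⧸ H (2 * t - 1)) ∧
  (∀ i < t, (ImageSet (H (2 * i)) X).ncard = (ImageSet (H (2 * i + 1)) X).ncard)

/-- `X` is a pyramidal set of `G`. -/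
def IsPyramidal {G : Type*} [AddCommGroup G] (X : Set G) : Prop :=
  0 ∈ X ∧ ∃ (t : ℕ) (H : ℕ → AddSubgroup G), IsAdmissibleSeries X t H

/- ### Auxiliary material -/

/-- `X ⊕ D = A`: every element has a unique representation. -/
def Tiles {A : Type*} [AddCommGroup A] (X D : Set A) : Prop :=
  ∀ g : A, ∃! sd : A × A, sd.1 ∈ X ∧ sd.2 ∈ D ∧ sd.1 + sd.2 = g

section TilesLemmas

variable {A B : Type*} [AddCommGroup A] [AddCommGroup B]

lemma tiles_injOn (f : A →+ B) {X : Set A} (hinj : Set.InjOn f X) {Db : Set B}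
    (h : Tiles (f '' X) Db) : Tiles X (f ⁻¹' Db) := by
  intro g
  obtain ⟨⟨xb, db⟩, hw, huniq⟩ := h (f g)
  obtain ⟨hxb, hdb, hsum⟩ := hw
  simp only at hxb hdb hsum
  obtain ⟨x, hx, hfx⟩ := hxb
  have h1 : f (g - x) = db := by
    rw [map_sub, hfx, ← hsum]; abel
  refine ⟨(x, g - x), ⟨hx, ?_, ?_⟩, ?_⟩
  · show g - x ∈ f ⁻¹' Db
    rw [Set.mem_preimage, h1]; exact hdb
  · show x + (g - x) = g
    exact add_sub_cancel x g
  · rintro ⟨x', d'⟩ ⟨hx', hd', hs'⟩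
    simp only at hx' hd' hs'
    have hkey := huniq (f x', f d') ⟨⟨x', hx', rfl⟩, hd', by rw [← map_add, hs']⟩
    have hfx' : f x' = xb := congrArg Prod.fst hkey
    have hxx : x' = x := hinj hx' hx (by rw [hfx', ← hfx])
    refine Prod.ext hxx ?_
    show d' = g - x
    have hx2 : x + d' = g := by rw [← hxx]; exact hs'
    exact eq_sub_of_add_eq' hx2

lemma tiles_preimage (f : A →+ B) (hsurj : Function.Surjective f) {Xb Db : Set B}
    (h0 : 0 ∈ Db) (h : Tiles Xb Db) : ∃ D : Set A, 0 ∈ D ∧ Tiles (f ⁻¹' Xb) D := by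
  classical
  choose s hs using hsurj
  set s' : B → A := fun b => if b = 0 then 0 else s b with hs'def
  have hs' : ∀ b, f (s' b) = b := by
    intro b
    by_cases hb : b = 0
    · simp [s', hb]
    · simp [s', hb, hs]
  refine ⟨s' '' Db, ⟨0, h0, by simp [s']⟩, fun g => ?_⟩
  obtain ⟨⟨xb, db⟩, hw, huniq⟩ := h (f g)
  obtain ⟨hxb, hdb, hsum⟩ := hw
  simp only at hxb hdb hsum
  refine ⟨(g - s' db, s' db), ⟨?_, ⟨db, hdb, rfl⟩, ?_⟩, ?_⟩
  · show f (g - s' db) ∈ Xb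
    rw [map_sub, hs', ← hsum]
    have h1 : xb + db - db = xb := by abel
    rw [h1]; exact hxb
  · show g - s' db + s' db = g
    exact sub_add_cancel g (s' db)
  · rintro ⟨x', d'⟩ ⟨hx', hd', hsum'⟩
    simp only at hx' hsum'
    obtain ⟨db', hdb', rfl⟩ := hd'
    have hkey := huniq (f x', db')
      ⟨hx', hdb', by rw [← hs' db', ← map_add, hsum']⟩
    have h2 : db' = db := congrArg Prod.snd hkey
    refine Prod.ext ?_ (by rw [h2])
    show x' = g - s' db
    rw [← h2]
    exact eq_sub_of_add_eq hsum'

end TilesLemmas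

section QuotientSteps

variable {G : Type*} [AddCommGroup G]

/-- The natural map `G ⧸ K →+ G ⧸ L` for `K ≤ L`. -/
noncomputable def qmap (K L : AddSubgroup G) (h : K ≤ L) : G ⧸ K →+ G ⧸ L :=
  QuotientAddGroup.map K L (AddMonoidHom.id G) (fun _ hx => h hx)

lemma qmap_mk (K L : AddSubgroup G) (h : K ≤ L) (g : G) :
    qmap K L h (QuotientAddGroup.mk g) = QuotientAddGroup.mk g :=
  QuotientAddGroup.map_mk K L (AddMonoidHom.id G) _ g

lemma qmap_surjective (K L : AddSubgroup G) (h : K ≤ L) :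
    Function.Surjective (qmap K L h) := by
  intro b
  induction b using QuotientAddGroup.induction_on with
  | H g => exact ⟨QuotientAddGroup.mk g, qmap_mk K L h g⟩

lemma qmap_image (K L : AddSubgroup G) (h : K ≤ L) (X : Set G) :
    qmap K L h '' ImageSet K X = ImageSet L X := by
  rw [ImageSet, ImageSet, ← Set.image_comp]
  refine congrArg (· '' X) ?_
  funext g
  exact qmap_mk K L h g

lemma step_even (X : Set G) (K L : AddSubgroup G) (hKL : K ≤ L)
    (hT1 : (ImageSet K X - ImageSet K X) ∩ ImageSet K ((L : Set G)) = {0})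
    (ih : ∃ Db : Set (G ⧸ L), 0 ∈ Db ∧ Tiles (ImageSet L X) Db) :
    ∃ D : Set (G ⧸ K), 0 ∈ D ∧ Tiles (ImageSet K X) D := by
  obtain ⟨Db, h0, hTiles⟩ := ih
  have hinj : Set.InjOn (qmap K L hKL) (ImageSet K X) := by
    rintro a ⟨x, hx, rfl⟩ b ⟨y, hy, rfl⟩ hab
    have hz : qmap K L hKL ((x : G ⧸ K) - (y : G ⧸ K)) = 0 := by
      rw [map_sub, hab, sub_self]
    rw [← QuotientAddGroup.mk_sub, qmap_mk] at hz
    have hxyL : x - y ∈ L := (QuotientAddGroup.eq_zero_iff _).mp hz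
    have hmem : (x : G ⧸ K) - (y : G ⧸ K) ∈
        (ImageSet K X - ImageSet K X) ∩ ImageSet K ((L : Set G)) := by
      refine ⟨Set.sub_mem_sub ⟨x, hx, rfl⟩ ⟨y, hy, rfl⟩, ⟨x - y, hxyL, ?_⟩⟩
      exact QuotientAddGroup.mk_sub K x y
    rw [hT1] at hmem
    have : (x : G ⧸ K) - (y : G ⧸ K) = 0 := hmem
    exact sub_eq_zero.mp this
  refine ⟨qmap K L hKL ⁻¹' Db, ?_, ?_⟩
  · show qmap K L hKL 0 ∈ Db
    rw [map_zero]; exact h0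
  · refine tiles_injOn (qmap K L hKL) hinj ?_
    rwa [qmap_image]

lemma step_odd (X : Set G) (K L : AddSubgroup G) (hKL : K ≤ L)
    (hT2 : PeriodicUnder (ImageSet K X) (ImageSet K ((L : Set G))))
    (ih : ∃ Db : Set (G ⧸ L), 0 ∈ Db ∧ Tiles (ImageSet L X) Db) :
    ∃ D : Set (G ⧸ K), 0 ∈ D ∧ Tiles (ImageSet K X) D := by
  obtain ⟨Db, h0, hTiles⟩ := ih
  have hpre : ImageSet K X = qmap K L hKL ⁻¹' (ImageSet L X) := by
    ext a
    constructor
    · rintro ⟨x, hx, rfl⟩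
      exact ⟨x, hx, (qmap_mk K L hKL x).symm⟩
    · intro ha
      induction a using QuotientAddGroup.induction_on with
      | H g =>
        obtain ⟨x, hx, hxg⟩ : ∃ x ∈ X, (x : G ⧸ L) = (g : G ⧸ L) := by
          rw [Set.mem_preimage, qmap_mk] at ha
          exact ha
        have hgl : g - x ∈ L := by
          have : ((g - x : G) : G ⧸ L) = 0 := by
            rw [QuotientAddGroup.mk_sub, hxg, sub_self]
          exact (QuotientAddGroup.eq_zero_iff _).mp this
        have hper := hT2 ((g - x : G) : G ⧸ K) ⟨g - x, hgl, rfl⟩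
        rw [← hper]
        refine ⟨(x : G ⧸ K), ⟨x, hx, rfl⟩, ?_⟩
        show (x : G ⧸ K) + ((g - x : G) : G ⧸ K) = (g : G ⧸ K)
        rw [← QuotientAddGroup.mk_add]
        congr 1
        exact add_sub_cancel x g
  rw [hpre]
  exact tiles_preimage (qmap K L hKL) (qmap_surjective K L hKL) h0 hTiles

lemma bottom_step (X : Set G) (K : AddSubgroup G)
    (hper : PeriodicUnder X ((K : Set G)))
    (ih : ∃ Db : Set (G ⧸ K), 0 ∈ Db ∧ Tiles (ImageSet K X) Db) :
    ∃ D : Set G, 0 ∈ D ∧ Tiles X D := by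
  obtain ⟨Db, h0, hTiles⟩ := ih
  have hpre : X = (QuotientAddGroup.mk' K) ⁻¹' (ImageSet K X) := by
    ext g
    constructor
    · intro hg; exact ⟨g, hg, rfl⟩
    · rintro ⟨x, hx, hxg⟩
      have hgK : g - x ∈ K := by
        have : ((g - x : G) : G ⧸ K) = 0 := by
          rw [QuotientAddGroup.mk_sub]
          have : (x : G ⧸ K) = (g : G ⧸ K) := hxg
          rw [this, sub_self]
        exact (QuotientAddGroup.eq_zero_iff _).mp this
      have hp := hper (g - x) hgK
      rw [← hp]
      refine ⟨x, hx, ?_⟩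
      show x + (g - x) = g
      exact add_sub_cancel x g
  rw [hpre]
  exact tiles_preimage _ (QuotientAddGroup.mk'_surjective K) h0 hTiles

end QuotientSteps

theorem stmt_13 (n p ℓ m : ℕ) (hp : p.Prime) (hl : 1 ≤ ℓ) (hm : 2 ≤ m)
    (hn : n = p ^ ℓ * m) (S : Finset (ZMod n))
    (h0 : (0 : ZMod n) ∉ S) (hsym : ∀ s ∈ S, -s ∈ S)
    (hdeg : S.card = p ^ ℓ - 1)
    (hconn : AddSubgroup.closure (S : Set (ZMod n)) = ⊤)
    (hnoncomplete : insert (0 : ZMod n) (S : Set (ZMod n)) ≠ Set.univ)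
    (hpyr : IsPyramidal (insert (0 : ZMod n) (S : Set (ZMod n))))
    (hint : (insert (0 : ZMod n) (S : Set (ZMod n)) -
          insert (0 : ZMod n) (S : Set (ZMod n))) ∩
        (AddSubgroup.zmultiples (((p ^ ℓ : ℕ) : ZMod n)) : Set (ZMod n)) ≠ {0}) :
    (∃ D : Set (ZMod n), 0 ∈ D ∧
        IsCayleyPerfectCode (insert (0 : ZMod n) (S : Set (ZMod n))) D) ∧
      ∀ H : AddSubgroup (ZMod n),
        ¬ IsCayleyPerfectCode (insert (0 : ZMod n) (S : Set (ZMod n)))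
            (H : Set (ZMod n)) := by
  haveI : NeZero n := ⟨by
    subst hn
    exact Nat.mul_ne_zero (pow_ne_zero _ hp.pos.ne') (by omega)⟩
  set X : Set (ZMod n) := insert (0 : ZMod n) (S : Set (ZMod n)) with hXdef
  have hpl1 : 1 ≤ p ^ ℓ := Nat.one_le_pow _ _ hp.pos
  constructor
  · -- existence of a perfect code containing 0
    obtain ⟨hX0, t, Hs, ht1, hlt, _hle, _htop, hbase, hT1, hT2, hcard, _hT3⟩ := hpyr
    -- base case of the descent
    have hbase' : ∃ Db : Set (ZMod n ⧸ Hs (2 * t - 1)), 0 ∈ Db ∧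
        Tiles (ImageSet (Hs (2 * t - 1)) X) Db := by
      have huniv : ImageSet (Hs (2 * t - 1)) X = Set.univ := by
        refine Set.eq_of_subset_of_ncard_le (Set.subset_univ _) ?_ Set.finite_univ
        rw [Set.ncard_univ]
        exact hcard.ge
      refine ⟨{0}, rfl, ?_⟩
      rw [huniv]
      intro g
      refine ⟨(g, 0), ⟨trivial, rfl, add_zero g⟩, ?_⟩
      rintro ⟨x, d⟩ ⟨-, hd, hs⟩
      simp only at hd hs
      have hd0 : d = 0 := hd
      subst hd0
      refine Prod.ext ?_ rfl
      simpa using hs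
    have key : ∀ k, k ≤ 2 * t - 1 →
        ∃ Db : Set (ZMod n ⧸ Hs (2 * t - 1 - k)), 0 ∈ Db ∧
          Tiles (ImageSet (Hs (2 * t - 1 - k)) X) Db := by
      intro k
      induction k with
      | zero => intro _; simpa using hbase'
      | succ k ih =>
        intro hk
        obtain ⟨j, hj⟩ : ∃ j, 2 * t - 1 - (k + 1) = j := ⟨_, rfl⟩
        rw [hj]
        have ihh := ih (by omega)
        rw [show 2 * t - 1 - k = j + 1 by omega] at ihh
        have hKL : Hs j ≤ Hs (j + 1) := (hlt j (by omega)).le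
        rcases Nat.even_or_odd j with ⟨i, hi⟩ | ⟨i, hi⟩
        · have e1 : j = 2 * i := by omega
          subst hj
          rw [e1] at hKL ihh ⊢
          exact step_even X (Hs (2 * i)) (Hs (2 * i + 1)) hKL
            (hT1 i (by omega)) ihh
        · have e1 : j = 2 * i + 1 := by omega
          subst hj
          rw [e1] at hKL ihh ⊢
          have h2 := hT2 (i + 1) (by omega) (by omega)
          rw [show 2 * (i + 1) - 1 = 2 * i + 1 by omega,
            show 2 * (i + 1) = 2 * i + 1 + 1 by omega] at h2
          exact step_odd X (Hs (2 * i + 1)) (Hs (2 * i + 1 + 1)) hKL h2 ihh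
    have Q0 := key (2 * t - 1) le_rfl
    rw [show 2 * t - 1 - (2 * t - 1) = 0 by omega] at Q0
    have hper : PeriodicUnder X ((Hs 0 : Set (ZMod n))) := by
      rcases hbase with ⟨hbot, -⟩ | ⟨-, hper⟩
      · rw [hbot]
        intro h hh
        have : h = 0 := by simpa using hh
        subst this
        simp
      · exact hper
    obtain ⟨D, hD0, hDT⟩ := bottom_step X (Hs 0) hper Q0
    exact ⟨D, hD0, hDT⟩
  · -- no subgroup is a perfect code
    intro H hH
    have hT : Tiles X (H : Set (ZMod n)) := hH
    -- Step 1: (X - X) ∩ H = {0}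
    have claim1 : (X - X) ∩ (H : Set (ZMod n)) = {0} := by
      ext y
      constructor
      · rintro ⟨hy1, hy2⟩
        obtain ⟨a, ha, b, hb, hab⟩ := Set.mem_sub.mp hy1
        obtain ⟨w, hw, huniq⟩ := hT a
        have e1 := huniq (a, 0) ⟨ha, H.zero_mem, add_zero a⟩
        have e2 := huniq (b, y) ⟨hb, hy2, show b + y = a by rw [← hab]; abel⟩
        have : ((b, y) : ZMod n × ZMod n) = (a, 0) := e2.trans e1.symm
        have : y = 0 := congrArg Prod.snd this
        exact this
      · rintro rfl
        refine ⟨Set.mem_sub.mpr ⟨0, Set.mem_insert _ _, 0, Set.mem_insert _ _, sub_zero 0⟩,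
          H.zero_mem⟩
    -- Step 2: |X| = p ^ ℓ
    have hXcard : X.ncard = p ^ ℓ := by
      rw [hXdef, Set.ncard_insert_of_notMem (by simpa using h0) (Set.toFinite _),
        Set.ncard_coe_finset, hdeg]
      omega
    -- Step 3: the addition map X × H → ZMod n is bijective
    have hbij : Function.Bijective (fun sd : X × (H : Set (ZMod n)) =>
        (sd.1 : ZMod n) + sd.2) := by
      constructor
      · rintro ⟨⟨a, ha⟩, ⟨c, hc⟩⟩ ⟨⟨b, hb⟩, ⟨d, hd⟩⟩ hsum
        simp only at hsum
        obtain ⟨w, hw, huniq⟩ := hT (a + c)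
        have e1 := huniq (a, c) ⟨ha, hc, rfl⟩
        have e2 := huniq (b, d) ⟨hb, hd, hsum.symm⟩
        have e3 : ((a, c) : ZMod n × ZMod n) = (b, d) := e1.trans e2.symm
        have eab : a = b := congrArg Prod.fst e3
        have ecd : c = d := congrArg Prod.snd e3
        subst eab; subst ecd
        rfl
      · intro g
        obtain ⟨⟨x, d⟩, ⟨hx, hd, hs⟩, -⟩ := hT g
        exact ⟨⟨⟨x, hx⟩, ⟨d, hd⟩⟩, hs⟩
    have hcardH : Nat.card H = m := by
      have hb := Nat.card_eq_of_bijective _ hbij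
      rw [Nat.card_prod] at hb
      have hX' : Nat.card X = p ^ ℓ := by
        rw [Nat.card_coe_set_eq, hXcard]
      have hH' : Nat.card ((H : Set (ZMod n))) = Nat.card H := rfl
      rw [hX', hH', Nat.card_zmod] at hb
      exact Nat.eq_of_mul_eq_mul_left (by positivity) (hb.trans hn)
    -- Step 4: H ≤ zmultiples (p ^ ℓ)
    have hdvd : p ^ ℓ ∣ n := ⟨m, hn⟩
    have hle : H ≤ AddSubgroup.zmultiples (((p ^ ℓ : ℕ) : ZMod n)) := by
      intro x hx
      have h1 : m • x = 0 := by
        have h1' : (Nat.card H) • (⟨x, hx⟩ : H) = 0 := card_nsmul_eq_zero'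
        have h1'' : ((Nat.card H • (⟨x, hx⟩ : H) : H) : ZMod n) = (0 : ZMod n) := by
          rw [h1']; rfl
        rw [AddSubgroup.coe_nsmul] at h1''
        rwa [hcardH] at h1''
      have h2 : ((m * x.val : ℕ) : ZMod n) = 0 := by
        push_cast [ZMod.natCast_val, ZMod.cast_id]
        rw [← nsmul_eq_mul]
        exact h1
      have h3 : n ∣ m * x.val := (ZMod.natCast_eq_zero_iff _ n).mp h2
      have h4 : p ^ ℓ ∣ x.val := by
        obtain ⟨c, hc⟩ := h3
        refine ⟨c, ?_⟩
        have hmpos : 0 < m := by omega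
        apply Nat.eq_of_mul_eq_mul_left hmpos
        calc m * x.val = n * c := hc
          _ = m * (p ^ ℓ * c) := by rw [hn]; ring
      obtain ⟨c, hc⟩ := h4
      refine AddSubgroup.mem_zmultiples_iff.mpr ⟨(c : ℤ), ?_⟩
      have hxv : x = ((x.val : ℕ) : ZMod n) := by
        rw [ZMod.natCast_val, ZMod.cast_id]
      rw [hxv, hc]
      rw [zsmul_eq_mul]
      push_cast
      ring
    -- Step 5: card of zmultiples is m
    have hZcard : Nat.card (AddSubgroup.zmultiples (((p ^ ℓ : ℕ) : ZMod n))) = m := by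
      rw [Nat.card_zmultiples, ZMod.addOrderOf_coe _ (NeZero.ne n)]
      rw [Nat.gcd_comm, Nat.gcd_eq_left hdvd, hn]
      exact Nat.mul_div_cancel_left m (by positivity)
    -- Step 6: H = zmultiples (p ^ ℓ) as sets
    have hset : (H : Set (ZMod n)) =
        ((AddSubgroup.zmultiples (((p ^ ℓ : ℕ) : ZMod n))) : Set (ZMod n)) := by
      refine Set.eq_of_subset_of_ncard_le hle ?_ (Set.toFinite _)
      have e1 : ((H : Set (ZMod n))).ncard = m := by
        rw [← Nat.card_coe_set_eq]; exact hcardH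
      have e2 : (((AddSubgroup.zmultiples (((p ^ ℓ : ℕ) : ZMod n))) :
          Set (ZMod n))).ncard = m := by
        rw [← Nat.card_coe_set_eq]; exact hZcard
      rw [e1, e2]
    exact hint (hset ▸ claim1)
end

section
/- Let n ≥ 3, m a divisor of n, and Cay(ℤ_n, S) a circulant graph with S_0 satisfying (S_0 − S_0) ∩ ⟨n/m⟩ = {0}, where ⟨n/m⟩ is the subgroup of ℤ_n of order m. Then each coset of ⟨n/m⟩ in ℤ_n is an independent set of Cay(ℤ_n, S), and the canonical projection ℤ_n → ℤ_n/⟨n/m⟩ is a covering map from Cay(ℤ_n, S) onto Cay(ℤ_n/⟨n/m⟩, S/⟨n/m⟩). -/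
/-! If no nonzero difference of elements of `S ∪ {0}` lies in `H`, then no edge of `Cay(G, S)`
joins two points of the same coset of `H`, and two neighbours `v - s`, `v - s'` of a vertex `v`
are identified modulo `H` only when `s - s' ∈ H`, i.e. `s = s'`. So `G → G ⧸ H` is injective on
every neighbourhood, and it maps it onto the neighbourhood in `Cay(G ⧸ H, S ⧸ H)` because every
edge `q ~ v + H` with label `s + H` lifts to the edge `v ~ v - s`. -/

open Pointwise
open SimpleGraph

section CirculantGraph

variable {G G' : Type*} [AddCommGroup G] [AddCommGroup G'] {S : Set G}

theorem circulantGraph_adj_iff_of_neg_mem (hS : ∀ s ∈ S, -s ∈ S) {u v : G} :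
    (circulantGraph S).Adj u v ↔ u ≠ v ∧ u - v ∈ S := by
  rw [circulantGraph_adj, or_iff_left_of_imp fun h => by simpa using hS _ h]

theorem circulantGraph_adj_map (f : G →+ G') {u v : G} (h : (circulantGraph S).Adj u v)
    (hne : f u ≠ f v) : (circulantGraph (f '' S)).Adj (f u) (f v) :=
  ⟨hne, h.2.imp (fun hs => ⟨_, hs, map_sub f u v⟩) fun hs => ⟨_, hs, map_sub f v u⟩⟩

theorem exists_circulantGraph_adj_map_eq (f : G →+ G') {v : G} {q : G'}
    (h : (circulantGraph (f '' S)).Adj (f v) q) : ∃ u, (circulantGraph S).Adj v u ∧ f u = q := by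
  obtain ⟨hne, ⟨s, hs, hfs⟩ | ⟨s, hs, hfs⟩⟩ := h
  · have hu : f (v - s) = q := by rw [map_sub, hfs, sub_sub_cancel]
    refine ⟨v - s, ⟨fun heq => hne ?_, Or.inl (show v - (v - s) ∈ S by rwa [sub_sub_cancel])⟩, hu⟩
    rwa [← heq] at hu
  · have hu : f (v + s) = q := by rw [map_add, hfs, add_sub_cancel]
    refine ⟨v + s, ⟨fun heq => hne ?_, Or.inr (show v + s - v ∈ S by rwa [add_sub_cancel_left])⟩, hu⟩
    rwa [← heq] at hu

variable {H : AddSubgroup G}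

theorem eq_of_sub_mem_of_sub_inter_subset_zero
    (hSH : (insert 0 S - insert 0 S) ∩ (H : Set G) ⊆ {0}) {a b : G} (ha : a ∈ insert 0 S)
    (hb : b ∈ insert 0 S) (hab : a - b ∈ H) : a = b :=
  sub_eq_zero.1 (hSH ⟨Set.sub_mem_sub ha hb, hab⟩)

theorem not_circulantGraph_adj_of_sub_mem
    (hSH : (insert 0 S - insert 0 S) ∩ (H : Set G) ⊆ {0}) {u v : G} (huv : u - v ∈ H) :
    ¬ (circulantGraph S).Adj u v := by
  have eq_zero : ∀ s ∈ S, s ∈ H → s = 0 := fun s hs hsH =>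
    eq_of_sub_mem_of_sub_inter_subset_zero hSH (Set.mem_insert_of_mem 0 hs) (Set.mem_insert 0 S)
      (by rwa [sub_zero])
  rintro ⟨hne, hs | hs⟩
  · exact hne (sub_eq_zero.1 (eq_zero _ hs huv))
  · exact hne (sub_eq_zero.1 (eq_zero _ hs (sub_mem_comm_iff.1 huv))).symm

theorem bijOn_quotientAddGroupMk_neighborSet (hS : ∀ s ∈ S, -s ∈ S)
    (hSH : (insert 0 S - insert 0 S) ∩ (H : Set G) ⊆ {0}) (v : G) :
    Set.BijOn ((↑) : G → G ⧸ H) ((circulantGraph S).neighborSet v)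
      ((circulantGraph (((↑) : G → G ⧸ H) '' S)).neighborSet v) := by
  refine ⟨fun u hu => ?_, fun u hu w hw huw => ?_, fun q hq => ?_⟩
  · refine circulantGraph_adj_map (QuotientAddGroup.mk' H) hu fun heq => ?_
    exact not_circulantGraph_adj_of_sub_mem hSH (QuotientAddGroup.eq_iff_sub_mem.1 heq) hu
  · have hvu := ((circulantGraph_adj_iff_of_neg_mem hS).1 hu).2
    have hvw := ((circulantGraph_adj_iff_of_neg_mem hS).1 hw).2
    have hdiff : (v - w) - (v - u) ∈ H := by
      rw [sub_sub_sub_cancel_left]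
      exact QuotientAddGroup.eq_iff_sub_mem.1 huw
    exact (sub_right_inj.1 (eq_of_sub_mem_of_sub_inter_subset_zero hSH
      (Set.mem_insert_of_mem 0 hvw) (Set.mem_insert_of_mem 0 hvu) hdiff)).symm
  · obtain ⟨u, hvu, rfl⟩ := exists_circulantGraph_adj_map_eq (QuotientAddGroup.mk' H) hq
    exact ⟨u, hvu, rfl⟩

end CirculantGraph

theorem stmt_14_general (n : ℕ)
    (S : Set (ZMod n)) (hsym : ∀ s ∈ S, -s ∈ S)
    (H : AddSubgroup (ZMod n))
    (hint : (insert (0 : ZMod n) S - insert (0 : ZMod n) S) ∩ (H : Set (ZMod n)) = {0}) :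
    -- each coset of H is an independent set of Cay(ℤ_n, S)
    (∀ g : ZMod n, ∀ x ∈ (fun h => g + h) '' (H : Set (ZMod n)),
        ∀ y ∈ (fun h => g + h) '' (H : Set (ZMod n)),
          ¬ (SimpleGraph.fromRel (fun a b : ZMod n => a - b ∈ S)).Adj x y) ∧
    -- the canonical projection is a covering map onto Cay(ℤ_n/H, S/H)
    (Function.Surjective (QuotientAddGroup.mk : ZMod n → ZMod n ⧸ H) ∧
      ∀ v : ZMod n,
        Set.BijOn (QuotientAddGroup.mk : ZMod n → ZMod n ⧸ H)
          ((SimpleGraph.fromRel (fun a b : ZMod n => a - b ∈ S)).neighborSet v)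
          ((SimpleGraph.fromRel (fun a b : ZMod n ⧸ H =>
              a - b ∈ (QuotientAddGroup.mk : ZMod n → ZMod n ⧸ H) '' S)).neighborSet
            (QuotientAddGroup.mk v))) := by
  refine ⟨?_, QuotientAddGroup.mk_surjective, bijOn_quotientAddGroupMk_neighborSet hsym hint.subset⟩
  rintro g _ ⟨h₁, hh₁, rfl⟩ _ ⟨h₂, hh₂, rfl⟩
  refine not_circulantGraph_adj_of_sub_mem hint.subset ?_
  rw [add_sub_add_left_eq_sub]
  exact H.sub_mem hh₁ hh₂

theorem stmt_14 (n m : ℕ) (hn : 3 ≤ n) (hm : m ∣ n)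
    (S : Set (ZMod n)) (h0 : (0 : ZMod n) ∉ S) (hsym : ∀ s ∈ S, -s ∈ S)
    (H : AddSubgroup (ZMod n))
    (hHdef : H = AddSubgroup.zmultiples (((n / m : ℕ) : ZMod n)))
    (hint : (insert (0 : ZMod n) S - insert (0 : ZMod n) S) ∩ (H : Set (ZMod n)) = {0}) :
    -- each coset of H is an independent set of Cay(ℤ_n, S)
    (∀ g : ZMod n, ∀ x ∈ (fun h => g + h) '' (H : Set (ZMod n)),
        ∀ y ∈ (fun h => g + h) '' (H : Set (ZMod n)),
          ¬ (SimpleGraph.fromRel (fun a b : ZMod n => a - b ∈ S)).Adj x y) ∧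
    -- the canonical projection is a covering map onto Cay(ℤ_n/H, S/H)
    (Function.Surjective (QuotientAddGroup.mk : ZMod n → ZMod n ⧸ H) ∧
      ∀ v : ZMod n,
        Set.BijOn (QuotientAddGroup.mk : ZMod n → ZMod n ⧸ H)
          ((SimpleGraph.fromRel (fun a b : ZMod n => a - b ∈ S)).neighborSet v)
          ((SimpleGraph.fromRel (fun a b : ZMod n ⧸ H =>
              a - b ∈ (QuotientAddGroup.mk : ZMod n → ZMod n ⧸ H) '' S)).neighborSet
            (QuotientAddGroup.mk v))) :=
  stmt_14_general n S hsym H hint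
end

section
/- Let n ≥ 3, p a prime, and Cay(ℤ_n, S) a circulant graph such that |S_0| divides n and (S_0 − S_0) ∩ ⟨|S_0|⟩ = {0} in ℤ_n. Fix an integer m ≥ 1 and a feasible map σ : S_0 → {0,1,…,m−1} (i.e. σ(0) = 0 and T(σ) = {s + σ(s)n : s ∈ S} satisfies −T(σ) = T(σ) in ℤ_{mn}). Then (T(σ)_0 − T(σ)_0) ∩ ⟨|T(σ)_0|⟩ = {0} in ℤ_{mn}, where T(σ)_0 = T(σ) ∪ {0}. -/
open Pointwise

theorem stmt_15 (n p m : ℕ) (hn : 3 ≤ n) (hp : p.Prime) (hm : 1 ≤ m)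
    (S : Finset (ZMod n)) (h0 : (0 : ZMod n) ∉ S) (hsym : ∀ s ∈ S, -s ∈ S)
    (hdvd : (insert (0 : ZMod n) S).card ∣ n)
    (hint : (insert (0 : ZMod n) (S : Set (ZMod n)) -
          insert (0 : ZMod n) (S : Set (ZMod n))) ∩
        (AddSubgroup.zmultiples (((insert (0 : ZMod n) S).card : ZMod n)) :
          Set (ZMod n)) = {0})
    (σ : ZMod n → ℕ) (hσ0 : σ 0 = 0)
    (hσm : ∀ s ∈ insert (0 : ZMod n) S, σ s < m)
    (T : Set (ZMod (m * n)))
    (hT : T = (fun s : ZMod n => ((s.val + σ s * n : ℕ) : ZMod (m * n))) ''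
        (S : Set (ZMod n)))
    (hfeas : -T = T) :
    (insert (0 : ZMod (m * n)) T - insert (0 : ZMod (m * n)) T) ∩
        (AddSubgroup.zmultiples
            (((insert (0 : ZMod (m * n)) T).ncard : ZMod (m * n))) :
          Set (ZMod (m * n))) = {0} := by
  haveI : NeZero n := ⟨by omega⟩
  set f : ZMod n → ZMod (m * n) :=
    fun s : ZMod n => ((s.val + σ s * n : ℕ) : ZMod (m * n)) with hf
  let π : ZMod (m * n) →+* ZMod n := ZMod.castHom (dvd_mul_left n m) (ZMod n)
  have hπf : ∀ s : ZMod n, π (f s) = s := by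
    intro s
    simp only [hf, π, map_natCast]
    push_cast
    simp [ZMod.natCast_self, ZMod.natCast_val, ZMod.cast_id]
  have hfinj : Function.Injective f := by
    intro a b hab
    have := congrArg π hab
    rwa [hπf, hπf] at this
  have h0T : (0 : ZMod (m * n)) ∉ T := by
    rw [hT]
    rintro ⟨s, hs, hsval⟩
    have := hπf s
    rw [hsval, map_zero] at this
    exact h0 (by simpa [← this] using hs)
  have hcard : (insert (0 : ZMod (m * n)) T).ncard = (insert (0 : ZMod n) S).card := by
    have hTfin : T.Finite := by rw [hT]; exact (S : Set (ZMod n)).toFinite.image _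
    rw [Set.ncard_insert_of_notMem h0T hTfin, hT,
      Set.ncard_image_of_injective _ hfinj, Set.ncard_coe_finset,
      Finset.card_insert_of_notMem h0]
  apply subset_antisymm
  · rintro x ⟨hx1, hx2⟩
    -- decompose x = t1 - t2
    obtain ⟨t1, ht1, t2, ht2, hx⟩ := Set.mem_sub.mp hx1
    -- π x lies in the intersection downstairs
    have hπx : π x ∈ (insert (0 : ZMod n) (S : Set (ZMod n)) -
        insert (0 : ZMod n) (S : Set (ZMod n))) ∩
        (AddSubgroup.zmultiples (((insert (0 : ZMod n) S).card : ZMod n)) :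
          Set (ZMod n)) := by
      constructor
      · refine Set.mem_sub.mpr ⟨π t1, ?_, π t2, ?_, by rw [← hx, map_sub]⟩
        · rcases ht1 with h | h
          · simp [h]
          · rw [hT] at h; obtain ⟨s, hs, rfl⟩ := h
            rw [hπf]; exact Set.mem_insert_of_mem _ hs
        · rcases ht2 with h | h
          · simp [h]
          · rw [hT] at h; obtain ⟨s, hs, rfl⟩ := h
            rw [hπf]; exact Set.mem_insert_of_mem _ hs
      · obtain ⟨z, hz⟩ := AddSubgroup.mem_zmultiples_iff.mp hx2
        refine AddSubgroup.mem_zmultiples_iff.mpr ⟨z, ?_⟩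
        rw [← hz, map_zsmul]
        congr 1
        rw [hcard]
        simp [π, map_natCast]
    rw [hint] at hπx
    have hπ0 : π t1 = π t2 := by
      have : π t1 - π t2 = 0 := by rw [← map_sub, hx, hπx]
      exact sub_eq_zero.mp this
    -- from π t1 = π t2 deduce t1 = t2
    have ht12 : t1 = t2 := by
      rcases ht1 with h1 | h1 <;> rcases ht2 with h2 | h2
      · rw [h1, h2]
      · exfalso
        rw [hT] at h2; obtain ⟨s, hs, rfl⟩ := h2
        rw [h1, map_zero, hπf] at hπ0
        exact h0 (hπ0 ▸ hs)
      · exfalso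
        rw [hT] at h1; obtain ⟨s, hs, rfl⟩ := h1
        rw [h2, map_zero, hπf] at hπ0
        exact h0 (hπ0.symm ▸ hs)
      · rw [hT] at h1 h2
        obtain ⟨s1, hs1, rfl⟩ := h1
        obtain ⟨s2, hs2, rfl⟩ := h2
        rw [hπf, hπf] at hπ0
        rw [hπ0]
    rw [Set.mem_singleton_iff, ← hx, ht12, sub_self]
  · rintro x hx
    rw [Set.mem_singleton_iff] at hx
    subst hx
    exact ⟨Set.mem_sub.mpr ⟨0, Set.mem_insert _ _, 0, Set.mem_insert _ _, sub_self 0⟩,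
      AddSubgroup.zero_mem _⟩
end

section
/- Let n = p^ℓ m with p prime, ℓ ≥ 1, m ≥ 2, gcd(m,p)=1, and let Cay(ℤ_n, S) be a circulant graph of degree p^ℓ − 1. Then for any integers a, b ≥ 2, the composition of lifting operators satisfies (f̄_b ∘ f̄_a)(S_0) = f̄_{ab}(S_0). -/
open Pointwise

/-- The lift of a subset `X ⊆ ℤ_N` to `ℤ_{m'·N}` via a map `σ`, sending a class `x`
(with canonical representative `x.val ∈ {0,…,N-1}`) to `x.val + σ(x)·N`. -/
def liftSet (m' N : ℕ) (σ : ZMod N → ℕ) (X : Set (ZMod N)) : Set (ZMod (m' * N)) :=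
  (fun x : ZMod N => ((x.val + σ x * N : ℕ) : ZMod (m' * N))) '' X

/-- The family `f̄_{m'}(X₀)` of lifted extended connection sets `T(σ)₀ = T(σ) ∪ {0}`,
over all feasible maps `σ : X₀ → {0,…,m'-1}` (i.e. `σ 0 = 0` and
`T(σ) = {x + σ(x)·N : x ∈ X₀ \ {0}}` inverse-closed in `ℤ_{m'·N}`). -/
def FBar (m' : ℕ) {N : ℕ} (X0 : Set (ZMod N)) : Set (Set (ZMod (m' * N))) :=
  { Y | ∃ σ : ZMod N → ℕ, σ 0 = 0 ∧ (∀ x ∈ X0, σ x < m') ∧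
      -(liftSet m' N σ (X0 \ {0})) = liftSet m' N σ (X0 \ {0}) ∧
      Y = insert 0 (liftSet m' N σ (X0 \ {0})) }

/-- The blow-up `ḡ_{m'}(X₀) = {x + i·N : x ∈ X₀, 0 ≤ i ≤ m'-1} ⊆ ℤ_{m'·N}`. -/
def GBar (m' : ℕ) {N : ℕ} (X0 : Set (ZMod N)) : Set (ZMod (m' * N)) :=
  { y | ∃ x ∈ X0, ∃ i < m', y = ((x.val + i * N : ℕ) : ZMod (m' * N)) }

section Aux

/-- The single-element lifting map. -/
def emap (m' N : ℕ) (σ : ZMod N → ℕ) (x : ZMod N) : ZMod (m' * N) :=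
  ((x.val + σ x * N : ℕ) : ZMod (m' * N))

lemma liftSet_eq (m' N : ℕ) (σ : ZMod N → ℕ) (X : Set (ZMod N)) :
    liftSet m' N σ X = emap m' N σ '' X := rfl

lemma val_emap {N : ℕ} (hN : 0 < N) {a : ℕ} (σ : ZMod N → ℕ) (x : ZMod N) (hσ : σ x < a) :
    (emap a N σ x).val = x.val + σ x * N := by
  haveI : NeZero N := ⟨hN.ne'⟩
  haveI : NeZero (a * N) := ⟨Nat.mul_ne_zero (by omega) hN.ne'⟩
  apply ZMod.val_cast_of_lt
  have h1 : x.val < N := ZMod.val_lt x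
  calc x.val + σ x * N < N + σ x * N := by omega
    _ = (σ x + 1) * N := by ring
    _ ≤ a * N := Nat.mul_le_mul_right N hσ

lemma emap_zero {N : ℕ} (hN : 0 < N) (a : ℕ) (σ : ZMod N → ℕ) (hσ0 : σ 0 = 0) :
    emap a N σ 0 = 0 := by
  haveI : NeZero N := ⟨hN.ne'⟩
  simp [emap, hσ0]

lemma emap_ne_zero {N : ℕ} (hN : 0 < N) {a : ℕ} (σ : ZMod N → ℕ) (x : ZMod N)
    (hx : x ≠ 0) (hσ : σ x < a) : emap a N σ x ≠ 0 := by
  haveI : NeZero N := ⟨hN.ne'⟩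
  haveI : NeZero (a * N) := ⟨Nat.mul_ne_zero (by omega) hN.ne'⟩
  intro h
  have hv : (emap a N σ x).val = x.val + σ x * N := val_emap hN σ x hσ
  rw [h, ZMod.val_zero] at hv
  have hx0 : x.val ≠ 0 := fun hh => hx ((ZMod.val_eq_zero x).1 hh)
  omega

lemma zero_notMem_lift {N : ℕ} (hN : 0 < N) {a : ℕ} (σ : ZMod N → ℕ) (A : Set (ZMod N))
    (hA0 : ∀ z ∈ A, z ≠ 0) (hAlt : ∀ z ∈ A, σ z < a) :
    (0 : ZMod (a * N)) ∉ emap a N σ '' A := by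
  rintro ⟨z, hz, h⟩
  exact emap_ne_zero hN σ z (hA0 z hz) (hAlt z hz) h

lemma neg_set_eq {G : Type*} [SubtractionMonoid G] {A : Set G} (h : ∀ z ∈ A, -z ∈ A) :
    -A = A := by
  ext z
  simp only [Set.mem_neg]
  constructor
  · intro hz
    simpa using h _ hz
  · intro hz
    exact h z hz

/-- The composed lifting parameter. -/
def rhod {N : ℕ} (a : ℕ) (σ : ZMod N → ℕ) (τ : ZMod (a * N) → ℕ) : ZMod N → ℕ :=
  fun y => σ y + a * τ (emap a N σ y)

/-- The base-`a` digits of `ρ`. -/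
def sigd {N : ℕ} (a : ℕ) (ρ : ZMod N → ℕ) : ZMod N → ℕ := fun x => ρ x % a

def taud (a N : ℕ) (ρ : ZMod N → ℕ) : ZMod (a * N) → ℕ :=
  fun y => ρ (((y.val % N : ℕ) : ZMod N)) / a

/-- Pointwise: the composed double lift, recast to `ZMod (a*b*N)`, is the lift by `σ + a·τ∘emap`. -/
lemma comp_point {N : ℕ} (hN : 0 < N) {a b : ℕ} (ha : 0 < a) (hb : 0 < b)
    (σ : ZMod N → ℕ) (τ : ZMod (a * N) → ℕ) (x : ZMod N) (hσ : σ x < a) :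
    (((emap b (a * N) τ (emap a N σ x)).val : ℕ) : ZMod (a * b * N))
      = emap (a * b) N (rhod a σ τ) x := by
  haveI : NeZero (b * (a * N)) := ⟨by positivity⟩
  haveI : NeZero (a * b * N) := ⟨by positivity⟩
  have hMM : ((b * (a * N) : ℕ) : ZMod (a * b * N)) = 0 := by
    rw [ZMod.natCast_eq_zero_iff]
    exact ⟨1, by ring⟩
  have key : ∀ k : ℕ, (((k : ZMod (b * (a * N))).val : ℕ) : ZMod (a * b * N))
      = (k : ZMod (a * b * N)) := by
    intro k
    rw [ZMod.val_natCast]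
    conv_rhs => rw [← Nat.div_add_mod k (b * (a * N))]
    rw [Nat.cast_add, Nat.cast_mul, hMM, zero_mul, zero_add]
  have hL : emap b (a * N) τ (emap a N σ x)
      = (((emap a N σ x).val + τ (emap a N σ x) * (a * N) : ℕ) : ZMod (b * (a * N))) := rfl
  rw [hL, key, val_emap hN σ x hσ]
  simp only [emap, rhod]
  congr 1
  ring

lemma comp_image {N : ℕ} (hN : 0 < N) {a b : ℕ} (ha : 0 < a) (hb : 0 < b)
    (σ : ZMod N → ℕ) (τ : ZMod (a * N) → ℕ) (A : Set (ZMod N)) (hA : ∀ x ∈ A, σ x < a) :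
    (fun z : ZMod (b * (a * N)) => ((z.val : ℕ) : ZMod (a * b * N))) ''
        (liftSet b (a * N) τ (liftSet a N σ A))
      = liftSet (a * b) N (rhod a σ τ) A := by
  rw [liftSet_eq, liftSet_eq, liftSet_eq, ← Set.image_comp, ← Set.image_comp]
  apply Set.image_congr
  intro x hx
  exact comp_point hN ha hb σ τ x (hA x hx)

/-- the recast map commutes with negation -/
lemma cmap_neg {N a b : ℕ} (hN : 0 < N) (ha : 0 < a) (hb : 0 < b)
    (z : ZMod (b * (a * N))) :
    (((-z).val : ℕ) : ZMod (a * b * N)) = -((z.val : ℕ) : ZMod (a * b * N)) := by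
  haveI : NeZero (b * (a * N)) := ⟨by positivity⟩
  have hdvd : a * b * N ∣ b * (a * N) := ⟨1, by ring⟩
  have h1 : ∀ w : ZMod (b * (a * N)), ((w.val : ℕ) : ZMod (a * b * N))
      = ZMod.castHom hdvd (ZMod (a * b * N)) w := by
    intro w
    rw [ZMod.castHom_apply, ZMod.natCast_val]
  rw [h1, h1, map_neg]

lemma cmap_image_neg {N a b : ℕ} (hN : 0 < N) (ha : 0 < a) (hb : 0 < b)
    (B : Set (ZMod (b * (a * N)))) :
    -((fun z : ZMod (b * (a * N)) => ((z.val : ℕ) : ZMod (a * b * N))) '' B)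
      = (fun z : ZMod (b * (a * N)) => ((z.val : ℕ) : ZMod (a * b * N))) '' (-B) := by
  ext y
  simp only [Set.mem_neg, Set.mem_image]
  constructor
  · rintro ⟨z, hz, hzy⟩
    exact ⟨-z, by simpa [Set.mem_neg] using hz, by rw [cmap_neg hN ha hb, hzy, neg_neg]⟩
  · rintro ⟨z, hz, hzy⟩
    refine ⟨-z, by simpa [Set.mem_neg] using hz, ?_⟩
    rw [cmap_neg hN ha hb, hzy]

/-- base-`a` digit splitting of the relation `u + v + 1 = a*b`. -/
lemma pair_split {a b : ℕ} (ha : 0 < a) (u v : ℕ) (hu : u < a * b) (huv : u + v + 1 = a * b) :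
    u % a + v % a + 1 = a ∧ u / a + v / a + 1 = b := by
  have hb : 0 < b := by
    rcases Nat.eq_zero_or_pos b with h | h
    · subst h; omega
    · exact h
  have h1 := Nat.div_add_mod u a
  have h2 := Nat.div_add_mod v a
  have h3 : u % a < a := Nat.mod_lt _ ha
  have h4 : v % a < a := Nat.mod_lt _ ha
  have hkey : a * (u / a + v / a) + (u % a + v % a) + 1 = a * b := by
    rw [Nat.mul_add]; omega
  rcases Nat.lt_trichotomy (u / a + v / a + 1) b with h | h | h
  · exfalso
    have h5 : u / a + v / a + 2 ≤ b := by omega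
    have h6 : a * (u / a + v / a + 2) ≤ a * b := Nat.mul_le_mul_left a h5
    have h7 : a * (u / a + v / a + 2) = a * (u / a + v / a) + a + a := by ring
    omega
  · constructor
    · have h6 : a * (u / a + v / a + 1) = a * b := by rw [h]
      have h7 : a * (u / a + v / a + 1) = a * (u / a + v / a) + a := by ring
      omega
    · exact h
  · exfalso
    have h5 : b ≤ u / a + v / a := by omega
    have h6 : a * b ≤ a * (u / a + v / a) := Nat.mul_le_mul_left a h5
    omega

/-- If the lifts of `z` and `-z` sum to the full modulus, negation of lifts matches. -/
lemma emap_neg_eq {M : ℕ} (hM : 0 < M) {c : ℕ} (μ : ZMod M → ℕ) (z : ZMod M)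
    (hz : z ≠ 0) (hzc : μ z < c) (hzc' : μ (-z) < c) (hμ : μ z + μ (-z) + 1 = c) :
    -(emap c M μ z) = emap c M μ (-z) := by
  haveI : NeZero M := ⟨hM.ne'⟩
  have hzv : 0 < z.val := by
    have := (ZMod.val_eq_zero z).not
    have h2 : z.val ≠ 0 := fun hh => hz ((ZMod.val_eq_zero z).1 hh)
    omega
  have hzlt : z.val < M := ZMod.val_lt z
  have hneg : (-z).val = M - z.val := by
    rw [ZMod.neg_val]
    simp [hz]
  rw [eq_comm, eq_neg_iff_add_eq_zero]
  unfold emap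
  rw [← Nat.cast_add]
  have harith : (-z).val + μ (-z) * M + (z.val + μ z * M) = c * M := by
    have hexp : c * M = μ z * M + μ (-z) * M + M := by
      rw [← hμ]; ring
    omega
  rw [harith, ZMod.natCast_self]

lemma sum_eq_modulus {M : ℕ} (k k' : ℕ) (hk : 0 < k) (hk' : 0 < k')
    (hkM : k < M) (hk'M : k' < M) (h : ((k : ZMod M)) = -((k' : ZMod M))) :
    k + k' = M := by
  haveI : NeZero M := ⟨by omega⟩
  have h0 : ((k + k' : ℕ) : ZMod M) = 0 := by
    push_cast
    rw [h]
    ring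
  rw [ZMod.natCast_eq_zero_iff] at h0
  obtain ⟨c, hc⟩ := h0
  rcases Nat.lt_or_ge c 2 with hc2 | hc2
  · interval_cases c <;> omega
  · exfalso
    have : M * 2 ≤ M * c := Nat.mul_le_mul_left M hc2
    omega

lemma taud_emap {N : ℕ} (hN : 0 < N) {a : ℕ} (ha : 0 < a) (ρ : ZMod N → ℕ) (x : ZMod N) :
    taud a N ρ (emap a N (sigd a ρ) x) = ρ x / a := by
  haveI : NeZero N := ⟨hN.ne'⟩
  have hσ : sigd a ρ x < a := Nat.mod_lt _ ha
  have hv := val_emap hN (sigd a ρ) x hσ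
  show ρ (((emap a N (sigd a ρ) x).val % N : ℕ) : ZMod N) / a = ρ x / a
  rw [hv]
  have h1 : (x.val + sigd a ρ x * N) % N = x.val := by
    rw [Nat.add_mul_mod_self_right]
    exact Nat.mod_eq_of_lt (ZMod.val_lt x)
  rw [h1, ZMod.natCast_zmod_val]

lemma taud_zero {N : ℕ} (hN : 0 < N) {a : ℕ} (ha : 0 < a) (ρ : ZMod N → ℕ) (hρ0 : ρ 0 = 0) :
    taud a N ρ (0 : ZMod (a * N)) = 0 := by
  haveI : NeZero N := ⟨hN.ne'⟩
  haveI : NeZero (a * N) := ⟨(Nat.mul_pos ha hN).ne'⟩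
  show ρ (((0 : ZMod (a * N)).val % N : ℕ) : ZMod N) / a = 0
  rw [ZMod.val_zero]
  simp [hρ0]

lemma rhod_digits {N : ℕ} (hN : 0 < N) {a : ℕ} (ha : 0 < a) (ρ : ZMod N → ℕ) (x : ZMod N) :
    rhod a (sigd a ρ) (taud a N ρ) x = ρ x := by
  show sigd a ρ x + a * taud a N ρ (emap a N (sigd a ρ) x) = ρ x
  rw [taud_emap hN ha ρ x]
  show ρ x % a + a * (ρ x / a) = ρ x
  rw [Nat.mod_add_div]

end Aux

theorem stmt_17 (n p ℓ m : ℕ) (hp : p.Prime) (hl : 1 ≤ ℓ) (hm : 2 ≤ m)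
    (hn : n = p ^ ℓ * m) (hcop : Nat.gcd m p = 1)
    (S : Finset (ZMod n)) (h0 : (0 : ZMod n) ∉ S) (hsym : ∀ s ∈ S, -s ∈ S)
    (hdeg : S.card = p ^ ℓ - 1) (a b : ℕ) (ha : 2 ≤ a) (hb : 2 ≤ b) :
    (⋃ U ∈ FBar a (insert (0 : ZMod n) (S : Set (ZMod n))),
        (fun Y : Set (ZMod (b * (a * n))) =>
            (fun x : ZMod (b * (a * n)) => ((x.val : ℕ) : ZMod (a * b * n))) '' Y) ''
          FBar b U) =
      FBar (a * b) (insert (0 : ZMod n) (S : Set (ZMod n))) := by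
  have hn0 : 0 < n := by
    have hp2 : 2 ≤ p := hp.two_le
    rw [hn]
    exact Nat.mul_pos (pow_pos (by omega) ℓ) (by omega)
  have ha0 : 0 < a := by omega
  have hb0 : 0 < b := by omega
  haveI : NeZero n := ⟨hn0.ne'⟩
  haveI : NeZero (a * n) := ⟨by positivity⟩
  haveI : NeZero (a * b * n) := ⟨by positivity⟩
  haveI : NeZero (b * (a * n)) := ⟨by positivity⟩
  have h0S : (0 : ZMod n) ∉ (S : Set (ZMod n)) := by simpa using h0
  have hX0diff : insert (0 : ZMod n) (S : Set (ZMod n)) \ {0} = (S : Set (ZMod n)) :=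
    Set.insert_diff_self_of_notMem h0S
  have hSne : ∀ x ∈ (S : Set (ZMod n)), x ≠ (0 : ZMod n) := fun x hx h => h0S (h ▸ hx)
  have hSsym : ∀ x ∈ (S : Set (ZMod n)), -x ∈ (S : Set (ZMod n)) := by
    intro x hx
    exact_mod_cast hsym x (by exact_mod_cast hx)
  ext Y
  simp only [Set.mem_iUnion, Set.mem_image, exists_prop]
  constructor
  · rintro ⟨U, ⟨σ, hσ0, hσlt, hσsym, rfl⟩, V, ⟨τ, hτ0, hτlt, hτsym, rfl⟩, rfl⟩
    have hσS : ∀ x ∈ (S : Set (ZMod n)), σ x < a := fun x hx =>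
      hσlt x (Set.mem_insert_of_mem _ hx)
    have hU0 : (0 : ZMod (a * n)) ∉ liftSet a n σ (S : Set (ZMod n)) := by
      rw [liftSet_eq]
      exact zero_notMem_lift hn0 σ _ hSne hσS
    have hUdiff : insert (0 : ZMod (a * n))
          (liftSet a n σ ((insert (0 : ZMod n) (S : Set (ZMod n))) \ {0})) \ {0}
        = liftSet a n σ (S : Set (ZMod n)) := by
      rw [hX0diff]
      exact Set.insert_diff_self_of_notMem hU0
    have himg : (fun z : ZMod (b * (a * n)) => ((z.val : ℕ) : ZMod (a * b * n))) ''
        (liftSet b (a * n) τ ((insert (0 : ZMod (a * n))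
          (liftSet a n σ ((insert (0 : ZMod n) (S : Set (ZMod n))) \ {0}))) \ {0}))
        = liftSet (a * b) n (rhod a σ τ) ((insert (0 : ZMod n) (S : Set (ZMod n))) \ {0}) := by
      rw [hUdiff, hX0diff]
      exact comp_image hn0 ha0 hb0 σ τ _ hσS
    refine ⟨rhod a σ τ, ?_, ?_, ?_, ?_⟩
    · show σ 0 + a * τ (emap a n σ 0) = 0
      rw [emap_zero hn0 a σ hσ0, hσ0, hτ0]
      omega
    · intro x hx
      have h1 : σ x < a := hσlt x hx
      have h2 : τ (emap a n σ x) < b := by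
        apply hτlt
        rcases Set.mem_insert_iff.1 hx with rfl | hxS
        · rw [emap_zero hn0 a σ hσ0]
          exact Set.mem_insert _ _
        · exact Set.mem_insert_of_mem _ (by rw [hX0diff]; exact ⟨x, hxS, rfl⟩)
      show σ x + a * τ (emap a n σ x) < a * b
      have h3 : a * (τ (emap a n σ x) + 1) ≤ a * b := Nat.mul_le_mul_left a (by omega)
      have h4 : a * (τ (emap a n σ x) + 1) = a * τ (emap a n σ x) + a := by ring
      omega
    · rw [← himg, cmap_image_neg hn0 ha0 hb0, hτsym]
    · rw [Set.image_insert_eq, himg]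
      congr 1
      simp [ZMod.val_zero]
  · rintro ⟨ρ, hρ0, hρlt, hρsym, rfl⟩
    rw [hX0diff] at hρsym
    have hρS : ∀ x ∈ (S : Set (ZMod n)), ρ x < a * b := fun x hx =>
      hρlt x (Set.mem_insert_of_mem _ hx)
    have hkey : ∀ x ∈ (S : Set (ZMod n)), ρ x + ρ (-x) + 1 = a * b := by
      intro x hx
      have hxne := hSne x hx
      have hmem : emap (a * b) n ρ x ∈ liftSet (a * b) n ρ (S : Set (ZMod n)) := ⟨x, hx, rfl⟩
      have hneg : -(emap (a * b) n ρ x) ∈ liftSet (a * b) n ρ (S : Set (ZMod n)) := by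
        rw [← hρsym]
        exact Set.neg_mem_neg.2 hmem
      obtain ⟨x', hx', heq⟩ := hneg
      have hx'ne := hSne x' hx'
      have hv1 : (emap (a * b) n ρ x).val = x.val + ρ x * n := val_emap hn0 ρ x (hρS x hx)
      have hv2 : (emap (a * b) n ρ x').val = x'.val + ρ x' * n := val_emap hn0 ρ x' (hρS x' hx')
      have hlt1 : x.val + ρ x * n < a * b * n := by rw [← hv1]; exact ZMod.val_lt _
      have hlt2 : x'.val + ρ x' * n < a * b * n := by rw [← hv2]; exact ZMod.val_lt _
      have hp1 : x.val ≠ 0 := fun hh => hxne ((ZMod.val_eq_zero x).1 hh)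
      have hp2 : x'.val ≠ 0 := fun hh => hx'ne ((ZMod.val_eq_zero x').1 hh)
      have hsum : (x'.val + ρ x' * n) + (x.val + ρ x * n) = a * b * n := by
        apply sum_eq_modulus _ _ (by omega) (by omega) hlt2 hlt1
        exact heq
      have hvx : x.val < n := ZMod.val_lt x
      have hvx' : x'.val < n := ZMod.val_lt x'
      have hlt3 : ρ x' + ρ x < a * b := by
        by_contra hcon
        have h5 : a * b * n ≤ (ρ x' + ρ x) * n := Nat.mul_le_mul_right n (by omega)
        have h6 : (ρ x' + ρ x) * n = ρ x' * n + ρ x * n := by ring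
        omega
      obtain ⟨k, hk⟩ : ∃ k, a * b = ρ x' + ρ x + k + 1 := ⟨a * b - (ρ x' + ρ x) - 1, by omega⟩
      have h7 : a * b * n = ρ x' * n + ρ x * n + k * n + n := by rw [hk]; ring
      have hk0 : k = 0 := by
        rcases Nat.eq_zero_or_pos k with h | h
        · exact h
        · exfalso
          have h8 : n ≤ k * n := Nat.le_mul_of_pos_left n h
          omega
      have h9 : k * n = 0 := by rw [hk0]; ring
      have hnx : (-x).val = n - x.val := by rw [ZMod.neg_val]; simp [hxne]
      have hx'val : x'.val = (-x).val := by omega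
      have hx'eq : x' = -x := by
        rw [← ZMod.natCast_zmod_val x', hx'val, ZMod.natCast_zmod_val]
      rw [← hx'eq]
      omega
    have hdig : ∀ x ∈ (S : Set (ZMod n)),
        (ρ x % a + ρ (-x) % a + 1 = a ∧ ρ x / a + ρ (-x) / a + 1 = b) := fun x hx =>
      pair_split ha0 (ρ x) (ρ (-x)) (hρS x hx) (hkey x hx)
    have hnegA : ∀ x ∈ (S : Set (ZMod n)),
        -(emap a n (sigd a ρ) x) = emap a n (sigd a ρ) (-x) := by
      intro x hx
      exact emap_neg_eq hn0 (sigd a ρ) x (hSne x hx) (Nat.mod_lt _ ha0) (Nat.mod_lt _ ha0)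
        (hdig x hx).1
    have hτe : ∀ x : ZMod n, taud a n ρ (emap a n (sigd a ρ) x) = ρ x / a :=
      fun x => taud_emap hn0 ha0 ρ x
    have hnegB : ∀ x ∈ (S : Set (ZMod n)),
        -(emap b (a * n) (taud a n ρ) (emap a n (sigd a ρ) x))
          = emap b (a * n) (taud a n ρ) (emap a n (sigd a ρ) (-x)) := by
      intro x hx
      rw [← hnegA x hx]
      refine emap_neg_eq (by positivity) (taud a n ρ) _
        (emap_ne_zero hn0 _ x (hSne x hx) (Nat.mod_lt _ ha0)) ?_ ?_ ?_
      · rw [hτe x, Nat.div_lt_iff_lt_mul ha0, Nat.mul_comm b a]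
        exact hρS x hx
      · rw [hnegA x hx, hτe (-x), Nat.div_lt_iff_lt_mul ha0, Nat.mul_comm b a]
        exact hρS (-x) (hSsym x hx)
      · rw [hnegA x hx, hτe x, hτe (-x)]
        exact (hdig x hx).2
    have hliftA0 : (0 : ZMod (a * n)) ∉ liftSet a n (sigd a ρ) (S : Set (ZMod n)) := by
      rw [liftSet_eq]
      exact zero_notMem_lift hn0 _ _ hSne (fun x _ => Nat.mod_lt _ ha0)
    have hsymA : -(liftSet a n (sigd a ρ) (S : Set (ZMod n)))
        = liftSet a n (sigd a ρ) (S : Set (ZMod n)) := by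
      apply neg_set_eq
      rintro z ⟨x, hx, rfl⟩
      exact ⟨-x, hSsym x hx, (hnegA x hx).symm⟩
    have hUdiff2 : insert (0 : ZMod (a * n))
          (liftSet a n (sigd a ρ) ((insert (0 : ZMod n) (S : Set (ZMod n))) \ {0})) \ {0}
        = liftSet a n (sigd a ρ) (S : Set (ZMod n)) := by
      rw [hX0diff]
      exact Set.insert_diff_self_of_notMem hliftA0
    have hsymB : -(liftSet b (a * n) (taud a n ρ) (liftSet a n (sigd a ρ) (S : Set (ZMod n))))
        = liftSet b (a * n) (taud a n ρ) (liftSet a n (sigd a ρ) (S : Set (ZMod n))) := by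
      apply neg_set_eq
      rintro z ⟨y, ⟨x, hx, rfl⟩, rfl⟩
      exact ⟨emap a n (sigd a ρ) (-x), ⟨-x, hSsym x hx, rfl⟩, (hnegB x hx).symm⟩
    refine ⟨insert 0 (liftSet a n (sigd a ρ)
        ((insert (0 : ZMod n) (S : Set (ZMod n))) \ {0})),
      ⟨sigd a ρ, ?_, ?_, ?_, rfl⟩,
      insert 0 (liftSet b (a * n) (taud a n ρ) ((insert (0 : ZMod (a * n))
        (liftSet a n (sigd a ρ) ((insert (0 : ZMod n) (S : Set (ZMod n))) \ {0}))) \ {0})),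
      ⟨taud a n ρ, ?_, ?_, ?_, rfl⟩, ?_⟩
    · show ρ 0 % a = 0
      rw [hρ0]
      exact Nat.zero_mod a
    · intro x _
      exact Nat.mod_lt _ ha0
    · rw [hX0diff]
      exact hsymA
    · exact taud_zero hn0 ha0 ρ hρ0
    · intro y hy
      rcases Set.mem_insert_iff.1 hy with rfl | hyS
      · rw [taud_zero hn0 ha0 ρ hρ0]
        omega
      · rw [hX0diff] at hyS
        obtain ⟨x, hx, rfl⟩ := hyS
        show taud a n ρ (emap a n (sigd a ρ) x) < b
        rw [hτe x, Nat.div_lt_iff_lt_mul ha0, Nat.mul_comm b a]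
        exact hρS x hx
    · rw [hUdiff2]
      exact hsymB
    · rw [hUdiff2, Set.image_insert_eq,
        comp_image hn0 ha0 hb0 (sigd a ρ) (taud a n ρ) _ (fun x _ => Nat.mod_lt _ ha0),
        hX0diff]
      congr 1
      · simp [ZMod.val_zero]
      · rw [liftSet_eq, liftSet_eq]
        apply Set.image_congr
        intro x hx
        show emap (a * b) n (rhod a (sigd a ρ) (taud a n ρ)) x = emap (a * b) n ρ x
        unfold emap
        rw [rhod_digits hn0 ha0 ρ x]
end

section
/- Let n = p^ℓ m with p an odd prime and ℓ ≥ 1, m ≥ 2 integers such that m is a power of p (so n has no square-free divisor > 1 coprime to p). Then the number of connected circulant graphs Cay(ℤ_n, S) of order n and degree p^ℓ − 1 satisfying (S_0 − S_0) ∩ ⟨p^ℓ⟩ = {0} equals m^{(p^ℓ−1)/2}. -/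
open Pointwise

lemma ker_iff_aux {n q m : ℕ} (hn : n = q * m) [NeZero n] [NeZero q] (x : ZMod n) :
    ZMod.castHom (⟨m, hn⟩ : q ∣ n) (ZMod q) x = 0 ↔
      x ∈ AddSubgroup.zmultiples ((q : ℕ) : ZMod n) := by
  constructor
  · intro h
    rw [ZMod.castHom_apply, ← ZMod.natCast_val] at h
    obtain ⟨t, ht⟩ := (ZMod.natCast_eq_zero_iff _ _).mp h
    rw [AddSubgroup.mem_zmultiples_iff]
    refine ⟨t, ?_⟩
    have h2 : ((t : ℤ) • ((q : ℕ) : ZMod n)) = ((q * t : ℕ) : ZMod n) := by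
      rw [zsmul_eq_mul]; push_cast; ring
    rw [h2, ← ht, ZMod.natCast_val, ZMod.cast_id]
  · rintro ⟨t, rfl⟩
    rw [map_zsmul, map_natCast, ZMod.natCast_self, smul_zero]

theorem count_main (n q m k : ℕ) (hqk : q = 2 * k + 1) (hk : 1 ≤ k) (hm : 2 ≤ m)
    (hn : n = q * m)
    (hgen : ∀ x : ZMod n, ZMod.castHom (⟨m, hn⟩ : q ∣ n) (ZMod q) x = 1 →
      AddSubgroup.zmultiples x = ⊤) :
    Nat.card
        {S : Finset (ZMod n) //
          (0 : ZMod n) ∉ S ∧ (∀ s ∈ S, -s ∈ S) ∧ S.card = q - 1 ∧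
            AddSubgroup.closure (S : Set (ZMod n)) = ⊤ ∧
            (insert (0 : ZMod n) (S : Set (ZMod n)) -
                  insert (0 : ZMod n) (S : Set (ZMod n))) ∩
                (AddSubgroup.zmultiples (((q : ℕ) : ZMod n)) :
                  Set (ZMod n)) = {0}} =
      m ^ ((q - 1) / 2) := by
  classical
  haveI : NeZero q := ⟨by omega⟩
  haveI : NeZero n := ⟨by simp [hn]; omega⟩
  haveI : Fact (1 < q) := ⟨by omega⟩
  set φ : ZMod n →+* ZMod q := ZMod.castHom (⟨m, hn⟩ : q ∣ n) (ZMod q) with hφ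
  -- fiber cardinality
  have hfiber : ∀ c : ZMod q, Nat.card {x : ZMod n // φ x = c} = m := by
    intro c
    have e1 : {x : ZMod n // φ x = c} ≃ {x : ZMod n // φ x = 0} :=
      { toFun := fun x => ⟨x.1 - (c.val : ZMod n), by
          rw [map_sub, x.2, map_natCast, ZMod.natCast_rightInverse c, sub_self]⟩
        invFun := fun y => ⟨y.1 + (c.val : ZMod n), by
          rw [map_add, y.2, zero_add, map_natCast, ZMod.natCast_rightInverse c]⟩
        left_inv := fun x => by simp
        right_inv := fun y => by simp }
    have e2 : {x : ZMod n // φ x = 0} ≃ (AddSubgroup.zmultiples ((q : ℕ) : ZMod n)) :=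
      Equiv.subtypeEquivRight (fun x => ker_iff_aux hn x)
    rw [Nat.card_congr (e1.trans e2), Nat.card_zmultiples,
      ZMod.addOrderOf_coe _ (NeZero.ne n)]
    have hgcd : n.gcd q = q := Nat.gcd_eq_right ⟨m, hn⟩
    rw [hgcd, hn, Nat.mul_div_cancel_left _ (by omega : 0 < q)]
  -- the half-set P
  set P : Finset (ZMod q) := Finset.univ.filter (fun c => 1 ≤ c.val ∧ c.val ≤ k) with hPdef
  have hPmem : ∀ c : ZMod q, c ∈ P ↔ (1 ≤ c.val ∧ c.val ≤ k) := by
    intro c; simp [hPdef]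
  have hP0 : ∀ c ∈ P, c ≠ 0 := by
    intro c hc h0
    rw [hPmem] at hc
    rw [h0] at hc
    simp [ZMod.val_zero] at hc
  have hvneg : ∀ c : ZMod q, c ≠ 0 → (-c).val = q - c.val := by
    intro c hc
    haveI : NeZero c := ⟨hc⟩
    exact ZMod.val_neg_of_ne_zero c
  have hvpos : ∀ c : ZMod q, c ≠ 0 → 1 ≤ c.val := by
    intro c hc
    rcases Nat.eq_zero_or_pos c.val with h | h
    · exact absurd ((ZMod.val_eq_zero c).mp h) hc
    · exact h
  have hPneg : ∀ c ∈ P, -c ∉ P := by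
    intro c hc hnc
    rw [hPmem] at hc hnc
    rw [hvneg c (hP0 c (by rw [hPmem]; exact hc))] at hnc
    have := ZMod.val_lt c
    omega
  have hPcov : ∀ c : ZMod q, c ≠ 0 → c ∈ P ∨ -c ∈ P := by
    intro c hc
    have h1 := hvpos c hc
    have h2 := ZMod.val_lt c
    by_cases h : c.val ≤ k
    · left; rw [hPmem]; exact ⟨h1, h⟩
    · right; rw [hPmem, hvneg c hc]; omega
  have hPcard : P.card = k := by
    have himg : P.image ZMod.val = Finset.Icc 1 k := by
      ext a
      simp only [Finset.mem_image, Finset.mem_Icc]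
      constructor
      · rintro ⟨c, hc, rfl⟩
        exact (hPmem c).mp hc
      · rintro ⟨h1, h2⟩
        refine ⟨(a : ZMod q), ?_, ZMod.val_cast_of_lt (by omega)⟩
        rw [hPmem, ZMod.val_cast_of_lt (by omega : a < q)]
        exact ⟨h1, h2⟩
    have hinj : Set.InjOn ZMod.val (P : Set (ZMod q)) :=
      fun a _ b _ h => ZMod.val_injective q h
    rw [← Finset.card_image_of_injOn hinj, himg, Nat.card_Icc]
    omega
  have h1P : (1 : ZMod q) ∈ P := by
    rw [hPmem, ZMod.val_one]; omega
  -- the function-set side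
  have hB : Nat.card (∀ c : {c : ZMod q // c ∈ P}, {x : ZMod n // φ x = c.1}) = m ^ ((q-1)/2) := by
    rw [Nat.card_pi]
    rw [Finset.prod_congr rfl (fun c _ => hfiber c.1), Finset.prod_const,
      Finset.card_univ, Fintype.card_coe, hPcard]
    congr 1
    omega
  -- forward map on finsets
  set F : (∀ c : {c : ZMod q // c ∈ P}, {x : ZMod n // φ x = c.1}) → Finset (ZMod n) :=
    fun g => (P.attach.image fun c => (g c).1) ∪ (P.attach.image fun c => -(g c).1) with hF
  have hFmem : ∀ g (x : ZMod n),
      x ∈ F g ↔ (∃ c, (g c).1 = x) ∨ (∃ c, -(g c).1 = x) := by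
    intro g x
    simp [hF]
  -- φ-values on insert 0 (F g)
  have hshape : ∀ g (s : ZMod n), s ∈ insert (0 : ZMod n) ((F g : Set (ZMod n))) →
      (s = 0 ∧ φ s = 0) ∨ (∃ c, (g c).1 = s ∧ φ s = c.1) ∨
        (∃ c, -(g c).1 = s ∧ φ s = -c.1) := by
    intro g s hs
    rcases Set.mem_insert_iff.mp hs with rfl | hs
    · exact Or.inl ⟨rfl, map_zero φ⟩
    · rcases (hFmem g s).mp hs with ⟨c, hc⟩ | ⟨c, hc⟩
      · exact Or.inr (Or.inl ⟨c, hc, by rw [← hc]; exact (g c).2⟩)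
      · refine Or.inr (Or.inr ⟨c, hc, ?_⟩)
        rw [← hc, map_neg, (g c).2]
  -- injectivity of φ on insert 0 (F g)
  have hinj0 : ∀ g (s t : ZMod n), s ∈ insert (0 : ZMod n) ((F g : Set (ZMod n))) →
      t ∈ insert (0 : ZMod n) ((F g : Set (ZMod n))) → φ s = φ t → s = t := by
    intro g s t hs ht he
    rcases hshape g s hs with ⟨rfl, hp⟩ | ⟨c, hc, hp⟩ | ⟨c, hc, hp⟩ <;>
      rcases hshape g t ht with ⟨rfl, hq'⟩ | ⟨c', hc', hq'⟩ | ⟨c', hc', hq'⟩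
    · rfl
    · exact absurd (by rw [← hq', ← he, hp]) (Ne.symm (hP0 c'.1 c'.2))
    · exfalso
      have : c'.1 = 0 := by
        have h0 : (0 : ZMod q) = -c'.1 := by rw [← hp, he, hq']
        rw [eq_comm, neg_eq_iff_eq_neg, neg_zero] at h0
        exact h0
      exact hP0 c'.1 c'.2 this
    · exact absurd (by rw [← hp, he, hq']) (hP0 c.1 c.2)
    · have : c.1 = c'.1 := by rw [← hp, he, hq']
      have : c = c' := Subtype.ext this
      rw [← hc, ← hc', this]
    · exfalso
      have hcc : c.1 = -c'.1 := by rw [← hp, he, hq']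
      exact hPneg c'.1 c'.2 (hcc ▸ c.2)
    · exfalso
      have : c.1 = 0 := by
        have h0 : -c.1 = (0 : ZMod q) := by rw [← hp, he, hq']
        rwa [neg_eq_zero] at h0
      exact hP0 c.1 c.2 this
    · exfalso
      have hcc : c'.1 = -c.1 := by rw [← hq', ← he, hp]
      exact hPneg c.1 c.2 (hcc ▸ c'.2)
    · have : c.1 = c'.1 := by
        have := hp.symm.trans (he.trans hq')
        exact neg_injective this
      have : c = c' := Subtype.ext this
      rw [← hc, ← hc', this]
  -- properties of F g
  have hprop : ∀ g, (0 : ZMod n) ∉ F g ∧ (∀ s ∈ F g, -s ∈ F g) ∧ (F g).card = q - 1 ∧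
      AddSubgroup.closure ((F g : Set (ZMod n))) = ⊤ ∧
      (insert (0 : ZMod n) ((F g : Set (ZMod n))) - insert (0 : ZMod n) ((F g : Set (ZMod n)))) ∩
        (AddSubgroup.zmultiples (((q : ℕ) : ZMod n)) : Set (ZMod n)) = {0} := by
    intro g
    have h0F : (0 : ZMod n) ∉ F g := by
      intro h
      rcases (hFmem g 0).mp h with ⟨c, hc⟩ | ⟨c, hc⟩
      · have : c.1 = 0 := by rw [← (g c).2, hc, map_zero]
        exact hP0 c.1 c.2 this
      · have hc' : (g c).1 = 0 := by rw [← neg_eq_zero]; exact hc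
        have : c.1 = 0 := by rw [← (g c).2, hc', map_zero]
        exact hP0 c.1 c.2 this
    have hsymF : ∀ s ∈ F g, -s ∈ F g := by
      intro s hs
      rcases (hFmem g s).mp hs with ⟨c, hc⟩ | ⟨c, hc⟩
      · exact (hFmem g (-s)).mpr (Or.inr ⟨c, by rw [hc]⟩)
      · exact (hFmem g (-s)).mpr (Or.inl ⟨c, by rw [← hc, neg_neg]⟩)
    have hcardF : (F g).card = q - 1 := by
      have hi1 : Function.Injective (fun c : {c : ZMod q // c ∈ P} => (g c).1) := by
        intro c c' h
        have h2 : (g c).1 = (g c').1 := h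
        have : c.1 = c'.1 := by rw [← (g c).2, ← (g c').2, h2]
        exact Subtype.ext this
      have hi2 : Function.Injective (fun c : {c : ZMod q // c ∈ P} => -(g c).1) := by
        intro c c' h
        exact hi1 (neg_injective h)
      have hdisj : Disjoint (P.attach.image fun c => (g c).1)
          (P.attach.image fun c => -(g c).1) := by
        rw [Finset.disjoint_left]
        rintro x hx hx'
        rw [Finset.mem_image] at hx hx'
        obtain ⟨c, _, hc⟩ := hx
        obtain ⟨c', _, hc'⟩ := hx'
        have hc2 : (g c).1 = x := hc
        have hc2' : -(g c').1 = x := hc'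
        have hcc : c.1 = -c'.1 := by
          rw [← (g c).2, ← (g c').2, ← map_neg, hc2', hc2]
        exact hPneg c'.1 c'.2 (hcc ▸ c.2)
      have hFg : F g = (P.attach.image fun c => (g c).1) ∪
          (P.attach.image fun c => -(g c).1) := rfl
      rw [hFg]
      rw [Finset.card_union_of_disjoint hdisj, Finset.card_image_of_injective _ hi1,
        Finset.card_image_of_injective _ hi2, Finset.card_attach, hPcard]
      omega
    have hclF : AddSubgroup.closure ((F g : Set (ZMod n))) = ⊤ := by
      set c1 : {c : ZMod q // c ∈ P} := ⟨(1 : ZMod q), h1P⟩ with hc1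
      have hx1 : φ (g c1).1 = 1 := (g c1).2
      have hxF : (g c1).1 ∈ F g := (hFmem g _).mpr (Or.inl ⟨c1, rfl⟩)
      rw [eq_top_iff, ← hgen _ hx1, AddSubgroup.zmultiples_eq_closure]
      exact AddSubgroup.closure_mono (Set.singleton_subset_iff.mpr hxF)
    have htrF : (insert (0 : ZMod n) ((F g : Set (ZMod n))) -
          insert (0 : ZMod n) ((F g : Set (ZMod n)))) ∩
        (AddSubgroup.zmultiples (((q : ℕ) : ZMod n)) : Set (ZMod n)) = {0} := by
      ext x
      constructor
      · rintro ⟨⟨s, hs, t, ht, rfl⟩, hH⟩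
        have h0 : φ (s - t) = 0 := (ker_iff_aux hn _).mpr hH
        rw [map_sub, sub_eq_zero] at h0
        have := hinj0 g s t hs ht h0
        simp [this]
      · rintro rfl
        exact ⟨⟨0, Set.mem_insert _ _, 0, Set.mem_insert _ _, sub_self 0⟩,
          AddSubgroup.zero_mem _⟩
    exact ⟨h0F, hsymF, hcardF, hclF, htrF⟩
  -- injectivity of the induced map
  have hinjF : ∀ g g', F g = F g' → g = g' := by
    intro g g' h
    funext c
    have hmem : (g c).1 ∈ F g' := by
      rw [← h]; exact (hFmem g _).mpr (Or.inl ⟨c, rfl⟩)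
    rcases (hFmem g' _).mp hmem with ⟨c', hc'⟩ | ⟨c', hc'⟩
    · have : c'.1 = c.1 := by rw [← (g' c').2, hc', (g c).2]
      have hcc : c' = c := Subtype.ext this
      exact Subtype.ext (by rw [← hc', hcc])
    · exfalso
      have hcc : c.1 = -c'.1 := by
        rw [← (g c).2, ← hc', map_neg, (g' c').2]
      exact hPneg c'.1 c'.2 (hcc ▸ c.2)
  -- surjectivity
  have hsurjF : ∀ S : Finset (ZMod n), (0 : ZMod n) ∉ S → (∀ s ∈ S, -s ∈ S) →
      S.card = q - 1 →
      ((insert (0 : ZMod n) (S : Set (ZMod n)) - insert (0 : ZMod n) (S : Set (ZMod n))) ∩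
        (AddSubgroup.zmultiples (((q : ℕ) : ZMod n)) : Set (ZMod n)) = {0}) →
      ∃ g, F g = S := by
    intro S h0 hsym hcard htr
    set S0 : Finset (ZMod n) := insert 0 S with hS0
    have hS0coe : (S0 : Set (ZMod n)) = insert (0 : ZMod n) (S : Set (ZMod n)) := by
      simp [hS0]
    have hinjS : ∀ s ∈ S0, ∀ t ∈ S0, φ s = φ t → s = t := by
      intro s hs t ht he
      have hsub : s - t ∈ (insert (0 : ZMod n) (S : Set (ZMod n)) -
          insert (0 : ZMod n) (S : Set (ZMod n))) := by
        rw [← hS0coe]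
        exact Set.sub_mem_sub (by exact_mod_cast hs) (by exact_mod_cast ht)
      have hker : s - t ∈ (AddSubgroup.zmultiples (((q : ℕ) : ZMod n)) : Set (ZMod n)) := by
        apply (ker_iff_aux hn _).mp
        rw [map_sub, he, sub_self]
      have : s - t ∈ ({0} : Set (ZMod n)) := htr ▸ ⟨hsub, hker⟩
      exact sub_eq_zero.mp (Set.mem_singleton_iff.mp this)
    have hcard0 : S0.card = q := by
      rw [hS0, Finset.card_insert_of_notMem h0, hcard]; omega
    have himg : S0.image (fun s => φ s) = Finset.univ := by
      apply Finset.eq_univ_of_card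
      rw [Finset.card_image_of_injOn (fun s hs t ht => hinjS s hs t ht), hcard0, ZMod.card]
    have hexist : ∀ c : ZMod q, ∃ s ∈ S0, φ s = c := by
      intro c
      have : c ∈ S0.image (fun s => φ s) := by rw [himg]; exact Finset.mem_univ c
      rw [Finset.mem_image] at this
      exact this
    have hex : ∀ c : {c : ZMod q // c ∈ P}, ∃ s : ZMod n, s ∈ S ∧ φ s = c.1 := by
      intro c
      obtain ⟨s, hs, hsc⟩ := hexist c.1
      refine ⟨s, ?_, hsc⟩
      rcases Finset.mem_insert.mp hs with rfl | hs'
      · exact absurd (by rw [← hsc, map_zero]) (Ne.symm (hP0 c.1 c.2))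
      · exact hs'
    choose f hf1 hf2 using hex
    refine ⟨fun c => ⟨f c, hf2 c⟩, ?_⟩
    ext x
    rw [hFmem]
    constructor
    · rintro (⟨c, rfl⟩ | ⟨c, rfl⟩)
      · exact hf1 c
      · exact hsym _ (hf1 c)
    · intro hx
      have hxS0 : x ∈ S0 := Finset.mem_insert_of_mem hx
      have hx0 : φ x ≠ 0 := by
        intro h
        have : x = 0 := hinjS x hxS0 0 (Finset.mem_insert_self _ _) (by rw [h, map_zero])
        exact h0 (this ▸ hx)
      rcases hPcov (φ x) hx0 with hc | hc
      · left
        refine ⟨⟨φ x, hc⟩, ?_⟩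
        exact hinjS _ (Finset.mem_insert_of_mem (hf1 ⟨φ x, hc⟩)) x hxS0 (hf2 ⟨φ x, hc⟩)
      · right
        refine ⟨⟨-φ x, hc⟩, ?_⟩
        have hnx : -x ∈ S0 := Finset.mem_insert_of_mem (hsym x hx)
        have h2 : f ⟨-φ x, hc⟩ = -x := by
          apply hinjS _ (Finset.mem_insert_of_mem (hf1 ⟨-φ x, hc⟩)) _ hnx
          rw [hf2 ⟨-φ x, hc⟩, map_neg]
        show -(f ⟨-φ x, hc⟩) = x
        rw [h2, neg_neg]
  -- conclude
  rw [← hB]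
  apply (Nat.card_eq_of_bijective (fun g => (⟨F g, hprop g⟩ : {S : Finset (ZMod n) //
    (0 : ZMod n) ∉ S ∧ (∀ s ∈ S, -s ∈ S) ∧ S.card = q - 1 ∧
      AddSubgroup.closure (S : Set (ZMod n)) = ⊤ ∧
      (insert (0 : ZMod n) (S : Set (ZMod n)) - insert (0 : ZMod n) (S : Set (ZMod n))) ∩
        (AddSubgroup.zmultiples (((q : ℕ) : ZMod n)) : Set (ZMod n)) = {0}})) ?_).symm
  constructor
  · intro g g' h
    exact hinjF g g' (congrArg Subtype.val h)
  · rintro ⟨S, h0, hsym, hcard, hcl, htr⟩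
    obtain ⟨g, hg⟩ := hsurjF S h0 hsym hcard htr
    exact ⟨g, Subtype.ext hg⟩

theorem stmt_19 (n p ℓ m : ℕ) (hp : p.Prime) (hodd : Odd p)
    (hl : 1 ≤ ℓ) (hm : 2 ≤ m) (hn : n = p ^ ℓ * m)
    (hmp : ∃ r : ℕ, m = p ^ r) :
    Nat.card
        {S : Finset (ZMod n) //
          (0 : ZMod n) ∉ S ∧ (∀ s ∈ S, -s ∈ S) ∧ S.card = p ^ ℓ - 1 ∧
            AddSubgroup.closure (S : Set (ZMod n)) = ⊤ ∧
            (insert (0 : ZMod n) (S : Set (ZMod n)) -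
                  insert (0 : ZMod n) (S : Set (ZMod n))) ∩
                (AddSubgroup.zmultiples (((p ^ ℓ : ℕ) : ZMod n)) :
                  Set (ZMod n)) = {0}} =
      m ^ ((p ^ ℓ - 1) / 2) := by
  obtain ⟨r, hr⟩ := hmp
  have hp2 : p ≠ 2 := by
    rintro rfl
    simp [Nat.odd_iff] at hodd
  have hp3 : 3 ≤ p := by
    have := hp.two_le
    omega
  have hq3 : 3 ≤ p ^ ℓ := le_trans hp3 (Nat.le_self_pow (by omega) p)
  have hqodd : Odd (p ^ ℓ) := hodd.pow
  obtain ⟨k, hk⟩ := hqodd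
  have hk1 : 1 ≤ k := by
    have h3 : 3 ≤ 2 * k + 1 := hk ▸ hq3
    omega
  haveI : NeZero n := ⟨by rw [hn]; positivity⟩
  haveI : NeZero (p ^ ℓ) := ⟨by omega⟩
  have hgen : ∀ x : ZMod n, ZMod.castHom (⟨m, hn⟩ : p ^ ℓ ∣ n) (ZMod (p ^ ℓ)) x = 1 →
      AddSubgroup.zmultiples x = ⊤ := by
    intro x hx
    set a := x.val with ha
    have hval : ((a : ℕ) : ZMod (p ^ ℓ)) = 1 := by
      rw [ZMod.castHom_apply, ← ZMod.natCast_val] at hx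
      exact hx
    have hmod : a ≡ 1 [MOD p ^ ℓ] :=
      (ZMod.natCast_eq_natCast_iff a 1 (p ^ ℓ)).mp (by rw [hval, Nat.cast_one])
    have hmodp : a ≡ 1 [MOD p] := hmod.of_dvd (dvd_pow_self p (by omega))
    have hnd : ¬ p ∣ a := by
      intro hd
      have h1 : a % p = 1 % p := hmodp
      have h2 : a % p = 0 := Nat.mod_eq_zero_of_dvd hd
      have h3 : 1 % p = 1 := Nat.mod_eq_of_lt (by omega)
      rw [h2, h3] at h1
      exact zero_ne_one h1
    have hcop : n.gcd a = 1 := by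
      have h2 : Nat.Coprime (p ^ (ℓ + r)) a :=
        ((Nat.Prime.coprime_iff_not_dvd hp).mpr hnd).pow_left _
      have hnp : n = p ^ (ℓ + r) := by rw [hn, hr, pow_add]
      rw [hnp]; exact h2
    have hord : addOrderOf x = n := by
      conv_lhs => rw [← ZMod.natCast_rightInverse x]
      rw [ZMod.addOrderOf_coe _ (NeZero.ne n), ← ha, hcop, Nat.div_one]
    apply AddSubgroup.eq_top_of_card_eq
    rw [Nat.card_zmultiples, Nat.card_zmod, hord]
  exact count_main n (p ^ ℓ) m k hk hk1 hm hn hgen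
end
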